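/- arXiv:0705.3963 — 5 statements merged into one kernel-verified Lean document; each statement's English description precedes it below -/
import Mathlib

section
/- Let Ω be an open subset of ℝⁿ and let F ⊆ Ω be relatively closed in Ω. Let X₁, …, X_m be smooth vector fields on Ω each of which is tangential to F. Let γ : [0,1] → Ω be a smooth path with γ(0) ∈ F such that γ'(s) = ∑_{j=1}^m f_j(s) · X_j(γ(s)) for all s ∈ [0,1], where f₁, …, f_m : [0,1] → ℝ are smooth functions. Then γ(s) ∈ F for all s ∈ [0,1]. -/
open scoped RealInnerProductSpace
open Set Metric Filter Topology

/-- A vector `ξ` is *tangential* to `F` at a point `x₁ ∈ F` if `⟪x₁ - x₀, ξ⟫ = 0`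
for all points `x₀` satisfying `dist (x₀, F) = ‖x₁ - x₀‖`. -/
def TangentialAt {n : ℕ} (F : Set (EuclideanSpace ℝ (Fin n)))
    (x₁ ξ : EuclideanSpace ℝ (Fin n)) : Prop :=
  ∀ x₀ : EuclideanSpace ℝ (Fin n), Metric.infDist x₀ F = ‖x₁ - x₀‖ → ⟪x₁ - x₀, ξ⟫ = 0

/-- **Lemma 1 (Bony).** Let `Ω ⊆ ℝⁿ` be open and `F ⊆ Ω` relatively closed. If
`X₁, …, X_m` are smooth vector fields on `Ω` tangential to `F`, and `γ : [0,1] → Ω`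
is a smooth path with `γ(0) ∈ F` and `γ'(s) = ∑ⱼ fⱼ(s) Xⱼ(γ(s))` for smooth
functions `fⱼ`, then `γ(s) ∈ F` for all `s ∈ [0,1]`. -/
theorem bony_invariance {n m : ℕ}
    (Ω : Set (EuclideanSpace ℝ (Fin n))) (hΩ : IsOpen Ω)
    (F : Set (EuclideanSpace ℝ (Fin n))) (hFΩ : F ⊆ Ω)
    (hFclosed : closure F ∩ Ω ⊆ F)
    (X : Fin m → EuclideanSpace ℝ (Fin n) → EuclideanSpace ℝ (Fin n))
    (hX : ∀ j, ContDiffOn ℝ (⊤ : ℕ∞) (X j) Ω)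
    (hXtan : ∀ j, ∀ x₁ ∈ F, TangentialAt F x₁ (X j x₁))
    (γ : ℝ → EuclideanSpace ℝ (Fin n))
    (hγ : ContDiffOn ℝ (⊤ : ℕ∞) γ (Set.Icc 0 1))
    (hγΩ : ∀ s ∈ Set.Icc (0:ℝ) 1, γ s ∈ Ω)
    (f : Fin m → ℝ → ℝ)
    (hf : ∀ j, ContDiffOn ℝ (⊤ : ℕ∞) (f j) (Set.Icc 0 1))
    (hγ' : ∀ s ∈ Set.Icc (0:ℝ) 1,
      HasDerivWithinAt γ (∑ j, f j s • X j (γ s)) (Set.Icc 0 1) s)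
    (hγ0 : γ 0 ∈ F) :
    ∀ s ∈ Set.Icc (0:ℝ) 1, γ s ∈ F := by
  classical
  -- uniform bounds for the coefficient functions
  choose Mf hMf using fun j => isCompact_Icc.exists_bound_of_continuousOn (hf j).continuousOn
  have hMf0 : ∀ j, 0 ≤ Mf j := fun j =>
    le_trans (norm_nonneg _) (hMf j 0 ⟨le_refl 0, zero_le_one⟩)
  -- continuous induction
  have hclosed : IsClosed ({t | γ t ∈ F} ∩ Set.Icc 0 1) := by
    have he : {t | γ t ∈ F} ∩ Set.Icc (0:ℝ) 1 = Set.Icc (0:ℝ) 1 ∩ γ ⁻¹' (closure F) := by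
      ext t
      constructor
      · rintro ⟨ht, htI⟩
        exact ⟨htI, subset_closure ht⟩
      · rintro ⟨htI, ht⟩
        exact ⟨hFclosed ⟨ht, hγΩ t htI⟩, htI⟩
    rw [he]
    exact (hγ.continuousOn).preimage_isClosed_of_isClosed isClosed_Icc isClosed_closure
  intro τ hτ
  refine hclosed.Icc_subset_of_forall_exists_gt (hγ0 : (0:ℝ) ∈ {t | γ t ∈ F}) ?_ hτ
  rintro s₀ ⟨hs₀F, hs₀Ico⟩ y hy
  have hs₀F : γ s₀ ∈ F := hs₀F
  have hs₀I : s₀ ∈ Set.Icc (0:ℝ) 1 := ⟨hs₀Ico.1, hs₀Ico.2.le⟩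
  -- Lipschitz data for the vector fields near γ s₀
  have hXC : ∀ j, ContDiffAt ℝ 1 (X j) (γ s₀) := fun j =>
    ((hX j).contDiffAt (hΩ.mem_nhds (hFΩ hs₀F))).of_le (by simp)
  choose K U hU hlip using fun j => (hXC j).exists_lipschitzOnWith
  have hW : (Ω ∩ ⋂ j, U j) ∈ 𝓝 (γ s₀) :=
    Filter.inter_mem (hΩ.mem_nhds (hFΩ hs₀F)) (Filter.iInter_mem.2 hU)
  obtain ⟨ε, εpos, hball⟩ := Metric.nhds_basis_closedBall.mem_iff.1 hW
  set r := ε / 2 with hr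
  have rpos : 0 < r := by positivity
  -- compact truncation of F near γ s₀
  set Kc := F ∩ Metric.closedBall (γ s₀) ε with hKc
  have hKc_eq : Kc = closure F ∩ Metric.closedBall (γ s₀) ε := by
    apply Set.Subset.antisymm
    · exact Set.inter_subset_inter_left _ subset_closure
    · rintro z ⟨hz1, hz2⟩
      exact ⟨hFclosed ⟨hz1, (hball hz2).1⟩, hz2⟩
  have hKc_compact : IsCompact Kc := by
    refine (isCompact_closedBall (γ s₀) ε).of_isClosed_subset ?_ Set.inter_subset_right
    rw [hKc_eq]
    exact isClosed_closure.inter Metric.isClosed_closedBall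
  have hs₀Kc : γ s₀ ∈ Kc := ⟨hs₀F, Metric.mem_closedBall_self εpos.le⟩
  -- choice of the time interval
  obtain ⟨δ, δpos, hδ⟩ := Metric.continuousWithinAt_iff.1 (hγ.continuousOn s₀ hs₀I) r rpos
  set b := min (s₀ + δ / 2) 1 with hb
  have hs₀b : s₀ < b := lt_min (by linarith) hs₀Ico.2
  have hbI : Set.Icc s₀ b ⊆ Set.Icc (0:ℝ) 1 := fun t ht =>
    ⟨le_trans hs₀I.1 ht.1, le_trans ht.2 (min_le_right _ _)⟩
  have hclose : ∀ t ∈ Set.Icc s₀ b, dist (γ t) (γ s₀) < r := by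
    intro t ht
    apply hδ (hbI ht)
    rw [Real.dist_eq, abs_of_nonneg (sub_nonneg.2 ht.1)]
    have h1 := ht.2
    have h2 : b ≤ s₀ + δ / 2 := min_le_left _ _
    linarith
  -- nearest point selection
  have hnear : ∀ t ∈ Set.Icc s₀ b, ∃ p, p ∈ F ∧ p ∈ Metric.closedBall (γ s₀) ε ∧
      Metric.infDist (γ t) F = dist (γ t) p := by
    intro t ht
    obtain ⟨p, hpKc, hpd⟩ := hKc_compact.exists_infDist_eq_dist ⟨_, hs₀Kc⟩ (γ t)
    refine ⟨p, hpKc.1, hpKc.2, le_antisymm (Metric.infDist_le_dist_of_mem hpKc.1) ?_⟩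
    have hdp : dist (γ t) p ≤ dist (γ t) (γ s₀) := by
      rw [← hpd]; exact Metric.infDist_le_dist_of_mem hs₀Kc
    have hlb : ∀ z ∈ F, dist (γ t) p ≤ dist (γ t) z := by
      intro z hz
      by_cases hzb : z ∈ Metric.closedBall (γ s₀) ε
      · rw [← hpd]; exact Metric.infDist_le_dist_of_mem ⟨hz, hzb⟩
      · have h1 : ε < dist z (γ s₀) := by
          simpa [Metric.mem_closedBall, not_le] using hzb
        have h2 : dist z (γ s₀) ≤ dist z (γ t) + dist (γ t) (γ s₀) := dist_triangle _ _ _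
        have h3 := hclose t ht
        have h4 : dist z (γ t) = dist (γ t) z := dist_comm _ _
        rw [hr] at h3
        linarith [hdp]
    by_contra hcon
    push_neg at hcon
    obtain ⟨z, hzF, hzd⟩ := (Metric.infDist_lt_iff ⟨_, hγ0⟩).1 hcon
    exact absurd hzd (not_lt.2 (hlb z hzF))
  -- the squared distance function
  set d : ℝ → ℝ := fun t => Metric.infDist (γ t) F ^ 2 with hd
  have hd_cont : ContinuousOn d (Set.Icc s₀ b) :=
    (((Metric.continuous_infDist_pt F).comp_continuousOn
      ((hγ.continuousOn).mono hbI)).pow 2)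
  set C := 2 * ∑ j, Mf j * (K j : ℝ) with hC
  -- key differential inequality data
  have hCd : ∀ t ∈ Set.Icc s₀ b, ∀ p, p ∈ F → p ∈ Metric.closedBall (γ s₀) ε →
      Metric.infDist (γ t) F = dist (γ t) p →
      2 * ⟪γ t - p, ∑ j, f j t • X j (γ t)⟫ ≤ C * d t := by
    intro t ht p hpF hpB hpd
    have hγtB : γ t ∈ Metric.closedBall (γ s₀) ε :=
      Metric.mem_closedBall.2 (le_trans (hclose t ht).le (by rw [hr]; linarith))
    have htan : ∀ j, ⟪γ t - p, X j p⟫ = 0 := by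
      intro j
      have h0 := hXtan j p hpF (γ t) (by rw [hpd, dist_eq_norm, norm_sub_rev])
      have hne : γ t - p = -(p - γ t) := by abel
      rw [hne, inner_neg_left, h0, neg_zero]
    have hdt : d t = dist (γ t) p ^ 2 := by rw [hd]; simp only; rw [hpd]
    have hterm : ∀ j ∈ Finset.univ, f j t * ⟪γ t - p, X j (γ t)⟫ ≤ Mf j * (K j : ℝ) * d t := by
      intro j _
      have hγtU : γ t ∈ U j := Set.mem_iInter.1 (hball hγtB).2 j
      have hpU : p ∈ U j := Set.mem_iInter.1 (hball hpB).2 j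
      have hlipj : dist (X j (γ t)) (X j p) ≤ (K j : ℝ) * dist (γ t) p :=
        (hlip j).dist_le_mul _ hγtU _ hpU
      have hsplit : ⟪γ t - p, X j (γ t)⟫ = ⟪γ t - p, X j (γ t) - X j p⟫ := by
        rw [inner_sub_right, htan j, sub_zero]
      calc f j t * ⟪γ t - p, X j (γ t)⟫ ≤ |f j t * ⟪γ t - p, X j (γ t)⟫| := le_abs_self _
        _ = |f j t| * |⟪γ t - p, X j (γ t) - X j p⟫| := by rw [abs_mul, hsplit]
        _ ≤ Mf j * ((K j : ℝ) * dist (γ t) p * dist (γ t) p) := by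
            refine mul_le_mul ?_ ?_ (abs_nonneg _) (hMf0 j)
            · have := hMf j t (hbI ht); rwa [Real.norm_eq_abs] at this
            · calc |⟪γ t - p, X j (γ t) - X j p⟫|
                  ≤ ‖γ t - p‖ * ‖X j (γ t) - X j p‖ := abs_real_inner_le_norm _ _
                _ ≤ dist (γ t) p * ((K j : ℝ) * dist (γ t) p) := by
                    rw [← dist_eq_norm, ← dist_eq_norm]
                    exact mul_le_mul_of_nonneg_left hlipj dist_nonneg
                _ = (K j : ℝ) * dist (γ t) p * dist (γ t) p := by ring
        _ = Mf j * (K j : ℝ) * d t := by rw [hdt]; ring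
    have hsum : ⟪γ t - p, ∑ j, f j t • X j (γ t)⟫ = ∑ j, f j t * ⟪γ t - p, X j (γ t)⟫ := by
      rw [inner_sum]
      exact Finset.sum_congr rfl fun j _ => real_inner_smul_right _ _ _
    rw [hsum, hC]
    have h1 : ∑ j, f j t * ⟪γ t - p, X j (γ t)⟫ ≤ ∑ j, Mf j * (K j : ℝ) * d t :=
      Finset.sum_le_sum hterm
    have h2 : (∑ j, Mf j * (K j : ℝ) * d t) = (∑ j, Mf j * (K j : ℝ)) * d t := by
      rw [Finset.sum_mul]
    nlinarith [h1, h2]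
  -- the Gronwall-type slope estimate
  have hf' : ∀ t ∈ Set.Ico s₀ b, ∀ ρ, C * d t < ρ →
      ∃ᶠ z in 𝓝[>] t, (z - t)⁻¹ * (d z - d t) < ρ := by
    intro t ht ρ hρ
    have htb : t ∈ Set.Icc s₀ b := ⟨ht.1, ht.2.le⟩
    obtain ⟨p, hpF, hpB, hpd⟩ := hnear t htb
    have htI : t ∈ Set.Icc (0:ℝ) 1 := hbI htb
    set v := ∑ j, f j t • X j (γ t) with hv
    have hslope : Filter.Tendsto (slope γ t) (𝓝[>] t) (𝓝 v) := by
      have h1 := hasDerivWithinAt_iff_tendsto_slope.1 (hγ' t htI)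
      apply h1.mono_left
      rw [← nhdsWithin_Ioc_eq_nhdsGT ht.2]
      apply nhdsWithin_mono
      intro z hz
      exact ⟨hbI ⟨le_trans ht.1 hz.1.le, hz.2⟩, ne_of_gt hz.1⟩
    have hzt : Filter.Tendsto (fun z => z - t) (𝓝[>] t) (𝓝 0) := by
      have h1 : Filter.Tendsto (fun z : ℝ => z - t) (𝓝 t) (𝓝 (t - t)) :=
        (continuous_id.sub continuous_const).tendsto t
      rw [sub_self] at h1
      exact h1.mono_left nhdsWithin_le_nhds
    have hlim : Filter.Tendsto
        (fun z => 2 * ⟪γ t - p, slope γ t z⟫ + (z - t) * ‖slope γ t z‖ ^ 2)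
        (𝓝[>] t) (𝓝 (2 * ⟪γ t - p, v⟫ + 0 * ‖v‖ ^ 2)) :=
      ((tendsto_const_nhds.inner hslope).const_mul 2).add (hzt.mul ((hslope.norm).pow 2))
    have hlt : 2 * ⟪γ t - p, v⟫ + 0 * ‖v‖ ^ 2 < ρ := by
      have h1 := hCd t htb p hpF hpB hpd
      rw [← hv] at h1
      nlinarith [h1]
    have hev1 := hlim.eventually_lt_const hlt
    have hev2 : ∀ᶠ z in 𝓝[>] t,
        (z - t)⁻¹ * (d z - d t) ≤
          2 * ⟪γ t - p, slope γ t z⟫ + (z - t) * ‖slope γ t z‖ ^ 2 := by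
      filter_upwards [Ioc_mem_nhdsGT_of_mem ⟨le_refl t, ht.2⟩] with z hz
      have hzt' : 0 < z - t := sub_pos.2 hz.1
      have hdz : d z ≤ ‖γ z - p‖ ^ 2 := by
        rw [hd]; simp only
        rw [← dist_eq_norm]
        exact pow_le_pow_left₀ Metric.infDist_nonneg (Metric.infDist_le_dist_of_mem hpF) 2
      have hexp : ‖γ z - p‖ ^ 2
          = ‖γ t - p‖ ^ 2 + 2 * ⟪γ t - p, γ z - γ t⟫ + ‖γ z - γ t‖ ^ 2 := by
        have he : γ z - p = (γ t - p) + (γ z - γ t) := by abel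
        rw [he, norm_add_sq_real]
      have hdt : d t = ‖γ t - p‖ ^ 2 := by
        rw [hd]; simp only; rw [hpd, dist_eq_norm]
      have hkey : d z - d t ≤ 2 * ⟪γ t - p, γ z - γ t⟫ + ‖γ z - γ t‖ ^ 2 := by
        rw [hdt]; linarith [hdz, hexp.le]
      have h2 : 2 * ⟪γ t - p, slope γ t z⟫ + (z - t) * ‖slope γ t z‖ ^ 2
          = (z - t)⁻¹ * (2 * ⟪γ t - p, γ z - γ t⟫ + ‖γ z - γ t‖ ^ 2) := by
        rw [slope_def_module, real_inner_smul_right, norm_smul, Real.norm_eq_abs,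
          abs_of_pos (inv_pos.2 hzt'), mul_pow]
        field_simp
      rw [h2]
      exact mul_le_mul_of_nonneg_left hkey (inv_nonneg.2 hzt'.le)
    exact ((hev2.and hev1).mono fun z hz => lt_of_le_of_lt hz.1 hz.2).frequently
  -- apply Gronwall
  have hds₀ : d s₀ ≤ 0 := by
    rw [hd]; simp [Metric.infDist_zero_of_mem hs₀F]
  have hG := le_gronwallBound_of_liminf_deriv_right_le (f' := fun t => C * d t)
    (δ := 0) (K := C) (ε := 0) hd_cont hf' hds₀
    (fun t _ => by simp)
  have hFt : ∀ t ∈ Set.Icc s₀ b, γ t ∈ F := by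
    intro t ht
    have h0 := hG t ht
    rw [gronwallBound_ε0_δ0] at h0
    have h1 : Metric.infDist (γ t) F = 0 := by
      have h2 : Metric.infDist (γ t) F ^ 2 ≤ 0 := h0
      nlinarith [Metric.infDist_nonneg (x := γ t) (s := F)]
    have h2 : γ t ∈ closure F := (Metric.mem_closure_iff_infDist_zero ⟨_, hγ0⟩).2 h1
    exact hFclosed ⟨h2, hγΩ t (hbI ht)⟩
  exact ⟨min y b, hFt _ ⟨le_min hy.le hs₀b.le, min_le_right _ _⟩,
    lt_min hy hs₀b, min_le_left _ _⟩
end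

section
/- Let Ω be an open subset of ℝⁿ and let F ⊆ Ω be relatively closed in Ω. Let X₁, …, X_m be smooth vector fields on Ω each of which is tangential to F. Let γ : [0,1] → Ω be a smooth path such that γ'(s) = ∑_{j=1}^m f_j(s) · X_j(γ(s)) for all s ∈ [0,1], where f₁, …, f_m : [0,1] → ℝ are smooth functions, and suppose ε > 0 satisfies dist(γ(s), ∂Ω) ≥ 2ε for all s ∈ [0,1]. Define ρ : [0,1] → ℝ by ρ(s) = dist(γ(s), F)². Then there exists a constant L > 0 such that for every s ∈ [0,1) with ρ(s) ≤ ε², one has limsup_{h → 0⁺} (ρ(s+h) − ρ(s))/h ≤ L · ρ(s). -/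
open scoped RealInnerProductSpace

set_option maxHeartbeats 1000000

/-- Key estimate in the proof of Bony's lemma: with `ρ(s) = dist(γ(s), F)²`, there is a
constant `L > 0` such that `limsup_{h → 0⁺} (ρ(s+h) - ρ(s))/h ≤ L ρ(s)` whenever
`s ∈ [0,1)` and `ρ(s) ≤ ε²`. -/
theorem bony_key_estimate {n m : ℕ}
    (Ω : Set (EuclideanSpace ℝ (Fin n))) (hΩ : IsOpen Ω)
    (F : Set (EuclideanSpace ℝ (Fin n))) (hFΩ : F ⊆ Ω)
    (hFclosed : closure F ∩ Ω ⊆ F)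
    (X : Fin m → EuclideanSpace ℝ (Fin n) → EuclideanSpace ℝ (Fin n))
    (hX : ∀ j, ContDiffOn ℝ (⊤ : ℕ∞) (X j) Ω)
    (hXtan : ∀ j, ∀ x₁ ∈ F, TangentialAt F x₁ (X j x₁))
    (γ : ℝ → EuclideanSpace ℝ (Fin n))
    (hγ : ContDiffOn ℝ (⊤ : ℕ∞) γ (Set.Icc 0 1))
    (hγΩ : ∀ s ∈ Set.Icc (0:ℝ) 1, γ s ∈ Ω)
    (f : Fin m → ℝ → ℝ)
    (hf : ∀ j, ContDiffOn ℝ (⊤ : ℕ∞) (f j) (Set.Icc 0 1))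
    (hγ' : ∀ s ∈ Set.Icc (0:ℝ) 1,
      HasDerivWithinAt γ (∑ j, f j s • X j (γ s)) (Set.Icc 0 1) s)
    (ε : ℝ) (hε : 0 < ε)
    (hfar : ∀ s ∈ Set.Icc (0:ℝ) 1, 2 * ε ≤ Metric.infDist (γ s) (frontier Ω))
    (ρ : ℝ → ℝ) (hρ : ∀ s, ρ s = Metric.infDist (γ s) F ^ 2) :
    ∃ L > (0:ℝ), ∀ s ∈ Set.Ico (0:ℝ) 1, ρ s ≤ ε ^ 2 →
      Filter.limsup (fun h : ℝ => (ρ (s + h) - ρ s) / h) (nhdsWithin 0 (Set.Ioi 0))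
        ≤ L * ρ s := by
  classical
  rcases F.eq_empty_or_nonempty with hFe | hFne
  · refine ⟨1, one_pos, fun s _ _ => ?_⟩
    have h0 : ∀ t, ρ t = 0 := fun t => by simp [hρ, hFe]
    have heq : (fun h : ℝ => (ρ (s + h) - ρ s) / h) = fun _ => (0:ℝ) := by
      funext h; simp [h0]
    rw [heq, Filter.limsup_const]
    simp [h0 s]
  have hI01 : (0:ℝ) ∈ Set.Icc (0:ℝ) 1 := by norm_num
  set K : Set (EuclideanSpace ℝ (Fin n)) := γ '' Set.Icc 0 1 with hKdef
  have hKcomp : IsCompact K := isCompact_Icc.image_of_continuousOn hγ.continuousOn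
  have hKne : K.Nonempty := ⟨γ 0, 0, hI01, rfl⟩
  -- closed balls of radius ε around points of the curve stay in Ω
  have hball : ∀ t ∈ Set.Icc (0:ℝ) 1, Metric.closedBall (γ t) ε ⊆ Ω := by
    intro t ht y hy
    by_contra hyΩ
    set S := segment ℝ (γ t) y with hS
    have hSball : S ⊆ Metric.closedBall (γ t) ε :=
      (convex_closedBall _ _).segment_subset (Metric.mem_closedBall_self hε.le) hy
    have hSfr : ∀ z ∈ S, z ∉ frontier Ω := by
      intro z hz hzfr
      have h1 : Metric.infDist (γ t) (frontier Ω) ≤ dist (γ t) z :=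
        Metric.infDist_le_dist_of_mem hzfr
      have h2 : dist (γ t) z ≤ ε := by
        have := hSball hz; rwa [Metric.mem_closedBall, dist_comm] at this
      have := hfar t ht
      linarith
    have hP : IsPreconnected S := (convex_segment _ _).isPreconnected
    have hy' : y ∈ (closure Ω)ᶜ := by
      intro hy2
      rw [closure_eq_self_union_frontier] at hy2
      rcases hy2 with h | h
      · exact hyΩ h
      · exact hSfr y (right_mem_segment _ _ _) h
    have hsub : S ⊆ Ω ∪ (closure Ω)ᶜ := by
      intro z hz
      by_cases hz2 : z ∈ closure Ω
      · left
        rw [closure_eq_self_union_frontier] at hz2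
        rcases hz2 with h | h
        · exact h
        · exact absurd h (hSfr z hz)
      · right; exact hz2
    obtain ⟨z, -, hz1, hz2⟩ := hP Ω (closure Ω)ᶜ hΩ isClosed_closure.isOpen_compl hsub
      ⟨γ t, left_mem_segment _ _ _, hγΩ t ht⟩ ⟨y, right_mem_segment _ _ _, hy'⟩
    exact hz2 (subset_closure hz1)
  -- a compact neighbourhood of the curve inside Ω
  set K₂ : Set (EuclideanSpace ℝ (Fin n)) := Metric.cthickening ε K with hK₂def
  have hK₂comp : IsCompact K₂ := hKcomp.cthickening
  have hK₂Ω : K₂ ⊆ Ω := by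
    intro x hx
    have hle : Metric.infDist x K ≤ ε := by
      have h1 := Metric.mem_cthickening_iff.mp hx
      have h2 := ENNReal.toReal_mono ENNReal.ofReal_ne_top h1
      rw [ENNReal.toReal_ofReal hε.le] at h2
      exact h2
    obtain ⟨y, hyK, hyd⟩ := hKcomp.exists_infDist_eq_dist hKne x
    obtain ⟨t, ht, rfl⟩ := hyK
    refine hball t ht ?_
    rw [Metric.mem_closedBall]
    rw [hyd] at hle
    exact hle
  have hK₂ne : K₂.Nonempty := hKne.mono (Metric.self_subset_cthickening K)
  -- bound on the derivatives of the vector fields on K₂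
  have hfd : ∀ j, ContinuousOn (fderiv ℝ (X j)) Ω := fun j =>
    (hX j).continuousOn_fderiv_of_isOpen hΩ (by simp)
  obtain ⟨xD, hxD, hxDmax⟩ := hK₂comp.exists_isMaxOn hK₂ne
    (continuousOn_finset_sum _ fun j _ => (((hfd j).mono hK₂Ω).norm))
  set D : ℝ := ∑ j, ‖fderiv ℝ (X j) xD‖ with hDdef
  have hDnn : 0 ≤ D := Finset.sum_nonneg fun _ _ => norm_nonneg _
  have hDb : ∀ x ∈ K₂, ∀ j, ‖fderiv ℝ (X j) x‖ ≤ D := fun x hx j =>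
    le_trans (Finset.single_le_sum (f := fun j => ‖fderiv ℝ (X j) x‖)
      (fun _ _ => norm_nonneg _) (Finset.mem_univ j)) (hxDmax hx)
  -- bound on the coefficient functions
  obtain ⟨sM, hsM, hsMmax⟩ := isCompact_Icc.exists_isMaxOn (Set.nonempty_Icc.mpr zero_le_one)
    (continuousOn_finset_sum _ fun j _ => ((hf j).continuousOn).abs)
  set Mf : ℝ := ∑ j, |f j sM| with hMfdef
  have hMfnn : 0 ≤ Mf := Finset.sum_nonneg fun _ _ => abs_nonneg _
  have hMfb : ∀ t ∈ Set.Icc (0:ℝ) 1, ∀ j, |f j t| ≤ Mf := fun t ht j =>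
    le_trans (Finset.single_le_sum (f := fun j => |f j t|)
      (fun _ _ => abs_nonneg _) (Finset.mem_univ j)) (hsMmax ht)
  -- Lipschitz bound for γ
  have hγmaps : Set.MapsTo γ (Set.Icc 0 1) Ω := fun t ht => hγΩ t ht
  have hvcont : ContinuousOn (fun t => ∑ j, f j t • X j (γ t)) (Set.Icc (0:ℝ) 1) :=
    continuousOn_finset_sum _ fun j _ =>
      ((hf j).continuousOn).smul (((hX j).continuousOn).comp hγ.continuousOn hγmaps)
  obtain ⟨sC, hsC, hsCmax⟩ := isCompact_Icc.exists_isMaxOn (Set.nonempty_Icc.mpr zero_le_one)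
    hvcont.norm
  set Cγ : ℝ := ‖∑ j, f j sC • X j (γ sC)‖ with hCγdef
  have hCγnn : 0 ≤ Cγ := norm_nonneg _
  have hγlip : ∀ a ∈ Set.Icc (0:ℝ) 1, ∀ b ∈ Set.Icc (0:ℝ) 1, ‖γ b - γ a‖ ≤ Cγ * ‖b - a‖ :=
    fun a ha b hb =>
    (convex_Icc (0:ℝ) 1).norm_image_sub_le_of_norm_hasDerivWithin_le
      (fun t ht => hγ' t ht) (fun t ht => hsCmax ht) ha hb
  -- Lipschitz bound for ρ
  set d : ℝ → ℝ := fun t => Metric.infDist (γ t) F with hddef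
  have hdnn : ∀ t, 0 ≤ d t := fun t => Metric.infDist_nonneg
  have hdlip : ∀ a ∈ Set.Icc (0:ℝ) 1, ∀ b ∈ Set.Icc (0:ℝ) 1, |d b - d a| ≤ Cγ * |b - a| := by
    intro a ha b hb
    have h1 : |d b - d a| ≤ dist (γ b) (γ a) := by
      rw [abs_sub_le_iff]
      constructor
      · have := Metric.infDist_le_infDist_add_dist (x := γ b) (y := γ a) (s := F)
        linarith
      · have := Metric.infDist_le_infDist_add_dist (x := γ a) (y := γ b) (s := F)
        rw [dist_comm] at this
        linarith
    calc |d b - d a| ≤ dist (γ b) (γ a) := h1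
      _ = ‖γ b - γ a‖ := by rw [dist_eq_norm]
      _ ≤ Cγ * ‖b - a‖ := hγlip a ha b hb
      _ = Cγ * |b - a| := by rw [Real.norm_eq_abs]
  set B : ℝ := d 0 + Cγ with hBdef
  have hdB : ∀ t ∈ Set.Icc (0:ℝ) 1, d t ≤ B := by
    intro t ht
    have h1 := hdlip 0 hI01 t ht
    have h2 : |t - 0| ≤ 1 := by
      rw [sub_zero, abs_of_nonneg ht.1]; exact ht.2
    have h3 : Cγ * |t - 0| ≤ Cγ := by nlinarith
    have h4 : d t - d 0 ≤ |d t - d 0| := le_abs_self _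
    rw [hBdef]
    nlinarith [abs_nonneg (d t - d 0)]
  have hρlip : ∀ a ∈ Set.Icc (0:ℝ) 1, ∀ b ∈ Set.Icc (0:ℝ) 1,
      |ρ b - ρ a| ≤ 2 * B * Cγ * |b - a| := by
    intro a ha b hb
    have h1 := hdlip a ha b hb
    have h2 := hdB a ha
    have h3 := hdB b hb
    have h4 := hdnn a
    have h5 := hdnn b
    have : ρ b - ρ a = (d b - d a) * (d b + d a) := by
      simp only [hρ, hddef]; ring
    rw [this, abs_mul]
    have h6 : |d b + d a| ≤ 2 * B := by
      rw [abs_of_nonneg (by linarith)]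
      linarith
    calc |d b - d a| * |d b + d a| ≤ (Cγ * |b - a|) * (2 * B) := by
          apply mul_le_mul h1 h6 (abs_nonneg _)
          positivity
      _ = 2 * B * Cγ * |b - a| := by ring
  -- the constant
  refine ⟨2 * (m * Mf * D) + 1, by positivity, ?_⟩
  intro s hs hρs
  have hsI : s ∈ Set.Icc (0:ℝ) 1 := ⟨hs.1, hs.2.le⟩
  -- the foot point
  have hds : d s ≤ ε := by
    have h1 : d s ^ 2 ≤ ε ^ 2 := by rw [← hρ]; exact hρs
    nlinarith [hdnn s]
  obtain ⟨x₀, hx₀cl, hx₀d⟩ := isClosed_closure.exists_infDist_eq_dist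
    (Set.Nonempty.closure hFne) (γ s)
  rw [Metric.infDist_closure] at hx₀d
  have hdistx₀ : dist (γ s) x₀ ≤ ε := by rw [← hx₀d]; exact hds
  have hεfr : ε ≤ Metric.infDist x₀ (frontier Ω) := by
    have h1 : Metric.infDist (γ s) (frontier Ω)
        ≤ Metric.infDist x₀ (frontier Ω) + dist (γ s) x₀ :=
      Metric.infDist_le_infDist_add_dist
    have h2 := hfar s hsI
    linarith
  have hx₀fr : x₀ ∉ frontier Ω := by
    intro h
    have := Metric.infDist_zero_of_mem h
    rw [this] at hεfr
    linarith
  have hx₀Ω : x₀ ∈ Ω := by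
    have h1 : x₀ ∈ closure Ω := closure_mono hFΩ hx₀cl
    rw [closure_eq_self_union_frontier] at h1
    rcases h1 with h | h
    · exact h
    · exact absurd h hx₀fr
  have hx₀F : x₀ ∈ F := hFclosed ⟨hx₀cl, hx₀Ω⟩
  set c : EuclideanSpace ℝ (Fin n) := γ s - x₀ with hcdef
  have hρc : ρ s = ‖c‖ ^ 2 := by
    rw [hρ, hx₀d, dist_eq_norm]
  -- tangentiality
  have htan : ∀ j, ⟪c, X j x₀⟫ = 0 := by
    intro j
    have h1 : Metric.infDist (γ s) F = ‖x₀ - γ s‖ := by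
      rw [hx₀d, dist_eq_norm, norm_sub_rev]
    have h2 := hXtan j x₀ hx₀F (γ s) h1
    have h3 : c = -(x₀ - γ s) := by rw [hcdef]; abel
    rw [h3, inner_neg_left, h2, neg_zero]
  -- Lipschitz bound for the vector fields between x₀ and γ s
  have hγsK : γ s ∈ K := ⟨s, hsI, rfl⟩
  have hballK₂ : Metric.closedBall (γ s) ε ⊆ K₂ := fun z hz =>
    Metric.mem_cthickening_of_dist_le z (γ s) ε K hγsK (Metric.mem_closedBall.mp hz)
  have hx₀ball : x₀ ∈ Metric.closedBall (γ s) ε := by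
    rw [Metric.mem_closedBall, dist_comm]; exact hdistx₀
  have hXlip : ∀ j, ‖X j (γ s) - X j x₀‖ ≤ D * ‖c‖ := by
    intro j
    have := (convex_closedBall (γ s) ε).norm_image_sub_le_of_norm_fderiv_le
      (f := X j) (C := D)
      (fun z hz => ((hX j).differentiableOn (by simp)).differentiableAt
        (hΩ.mem_nhds (hK₂Ω (hballK₂ hz))))
      (fun z hz => hDb z (hballK₂ hz) j)
      hx₀ball (Metric.mem_closedBall_self hε.le)
    exact this
  -- the inner-product estimate
  set v : EuclideanSpace ℝ (Fin n) := ∑ j, f j s • X j (γ s) with hvdef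
  have hinner : ⟪c, v⟫ ≤ (m * Mf * D) * ρ s := by
    have hsum : ⟪c, v⟫ = ∑ j, f j s * ⟪c, X j (γ s)⟫ := by
      rw [hvdef, inner_sum]
      exact Finset.sum_congr rfl fun j _ => real_inner_smul_right _ _ _
    have hterm : ∀ j, f j s * ⟪c, X j (γ s)⟫ ≤ Mf * (D * ‖c‖ ^ 2) := by
      intro j
      have h1 : ⟪c, X j (γ s)⟫ = ⟪c, X j (γ s) - X j x₀⟫ := by
        have heq : X j (γ s) = (X j (γ s) - X j x₀) + X j x₀ := by abel
        conv_lhs => rw [heq]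
        rw [inner_add_right, htan j, add_zero]
      have h2 : |⟪c, X j (γ s) - X j x₀⟫| ≤ ‖c‖ * (D * ‖c‖) := by
        calc |⟪c, X j (γ s) - X j x₀⟫| ≤ ‖c‖ * ‖X j (γ s) - X j x₀‖ :=
              abs_real_inner_le_norm _ _
          _ ≤ ‖c‖ * (D * ‖c‖) := by
              apply mul_le_mul_of_nonneg_left (hXlip j) (norm_nonneg _)
      have h3 : |f j s * ⟪c, X j (γ s)⟫| ≤ Mf * (D * ‖c‖ ^ 2) := by
        rw [abs_mul, h1]
        calc |f j s| * |⟪c, X j (γ s) - X j x₀⟫| ≤ Mf * (‖c‖ * (D * ‖c‖)) := by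
              apply mul_le_mul (hMfb s hsI j) h2 (abs_nonneg _) hMfnn
          _ = Mf * (D * ‖c‖ ^ 2) := by ring
      exact le_trans (le_abs_self _) h3
    calc ⟪c, v⟫ = ∑ j, f j s * ⟪c, X j (γ s)⟫ := hsum
      _ ≤ ∑ _j : Fin m, Mf * (D * ‖c‖ ^ 2) := Finset.sum_le_sum fun j _ => hterm j
      _ = m * (Mf * (D * ‖c‖ ^ 2)) := by
          rw [Finset.sum_const, Finset.card_univ, Fintype.card_fin, nsmul_eq_mul]
      _ = (m * Mf * D) * ρ s := by rw [hρc]; ring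
  -- the difference quotient of γ tends to v from the right
  set l : Filter ℝ := nhdsWithin 0 (Set.Ioi 0) with hldef
  have hev1 : ∀ᶠ h in l, h ∈ Set.Ioi (0:ℝ) := eventually_mem_nhdsWithin
  have hev2 : ∀ᶠ h in l, h < 1 - s := by
    apply Filter.Eventually.filter_mono nhdsWithin_le_nhds
    exact Filter.Tendsto.eventually_lt_const (by linarith [hs.2]) Filter.tendsto_id
  have hmap : Filter.Tendsto (fun h : ℝ => s + h) l (nhdsWithin s (Set.Icc 0 1 \ {s})) := by
    apply tendsto_nhdsWithin_of_tendsto_nhds_of_eventually_within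
    · have : Filter.Tendsto (fun h : ℝ => s + h) (nhds 0) (nhds (s + 0)) :=
        (continuous_const.add continuous_id).tendsto 0
      rw [add_zero] at this
      exact this.mono_left nhdsWithin_le_nhds
    · filter_upwards [hev1, hev2] with h hh0 hh1
      refine ⟨⟨by linarith [hs.1, Set.mem_Ioi.mp hh0], by linarith⟩, ?_⟩
      simp only [Set.mem_singleton_iff]
      have := Set.mem_Ioi.mp hh0
      intro hcontra
      linarith [hcontra ▸ (by linarith : s < s + h)]
  have hslope0 := (hasDerivWithinAt_iff_tendsto_slope.mp (hγ' s hsI)).comp hmap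
  have hslope : Filter.Tendsto (fun h : ℝ => h⁻¹ • (γ (s + h) - γ s)) l (nhds v) := by
    refine hslope0.congr fun h => ?_
    simp only [Function.comp_apply, slope_def_module, add_sub_cancel_left]
  -- the comparison function
  set g : ℝ → ℝ := fun h => 2 * ⟪c, h⁻¹ • (γ (s + h) - γ s)⟫
    + h * ‖h⁻¹ • (γ (s + h) - γ s)‖ ^ 2 with hgdef
  have hgT : Filter.Tendsto g l (nhds (2 * ⟪c, v⟫)) := by
    have h1 : Filter.Tendsto (fun h : ℝ => 2 * ⟪c, h⁻¹ • (γ (s + h) - γ s)⟫) l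
        (nhds (2 * ⟪c, v⟫)) :=
      (Filter.Tendsto.inner tendsto_const_nhds hslope).const_mul 2
    have h2 : Filter.Tendsto (fun h : ℝ => h * ‖h⁻¹ • (γ (s + h) - γ s)‖ ^ 2) l
        (nhds (0 * ‖v‖ ^ 2)) :=
      (Filter.tendsto_id.mono_left nhdsWithin_le_nhds).mul (hslope.norm.pow 2)
    have := h1.add h2
    rw [zero_mul, add_zero] at this
    exact this
  -- eventual inequality
  have hev : ∀ᶠ h in l, (ρ (s + h) - ρ s) / h ≤ g h := by
    filter_upwards [hev1, hev2] with h hh0 hh1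
    have hh0' : (0:ℝ) < h := Set.mem_Ioi.mp hh0
    have hshI : s + h ∈ Set.Icc (0:ℝ) 1 := ⟨by linarith [hs.1], by linarith⟩
    set w : EuclideanSpace ℝ (Fin n) := γ (s + h) - γ s with hwdef
    have hkey : ρ (s + h) ≤ ‖c‖ ^ 2 + 2 * ⟪c, w⟫ + ‖w‖ ^ 2 := by
      have h1 : ρ (s + h) ≤ ‖γ (s + h) - x₀‖ ^ 2 := by
        rw [hρ]
        apply pow_le_pow_left₀ Metric.infDist_nonneg
        rw [← dist_eq_norm]
        exact Metric.infDist_le_dist_of_mem hx₀F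
      have h2 : γ (s + h) - x₀ = c + w := by rw [hcdef, hwdef]; abel
      rw [h2, norm_add_sq_real] at h1
      exact h1
    have hnum : ρ (s + h) - ρ s ≤ 2 * ⟪c, w⟫ + ‖w‖ ^ 2 := by
      rw [hρc]; linarith [hkey]
    have hineq : (ρ (s + h) - ρ s) / h ≤ (2 * ⟪c, w⟫ + ‖w‖ ^ 2) / h := by
      gcongr
    have hg : (2 * ⟪c, w⟫ + ‖w‖ ^ 2) / h = g h := by
      simp only [hgdef]
      rw [← hwdef]
      have hinn : ⟪c, h⁻¹ • w⟫ = h⁻¹ * ⟪c, w⟫ := real_inner_smul_right _ _ _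
      have hn : ‖h⁻¹ • w‖ = h⁻¹ * ‖w‖ := by
        rw [norm_smul, Real.norm_eq_abs, abs_of_pos (inv_pos.mpr hh0')]
      rw [hinn, hn]
      field_simp
    rw [← hg]
    exact hineq
  -- lower bound, giving coboundedness
  have hlow : ∀ᶠ h in l, -(2 * B * Cγ) ≤ (ρ (s + h) - ρ s) / h := by
    filter_upwards [hev1, hev2] with h hh0 hh1
    have hh0' : (0:ℝ) < h := Set.mem_Ioi.mp hh0
    have hshI : s + h ∈ Set.Icc (0:ℝ) 1 := ⟨by linarith [hs.1], by linarith⟩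
    have h1 := hρlip s hsI (s + h) hshI
    have h2 : |s + h - s| = h := by
      rw [add_sub_cancel_left, abs_of_pos hh0']
    rw [h2] at h1
    rw [le_div_iff₀ hh0']
    have h3 := neg_abs_le (ρ (s + h) - ρ s)
    nlinarith
  haveI : l.NeBot := by rw [hldef]; exact nhdsGT_neBot 0
  have hcb : Filter.IsCoboundedUnder (· ≤ ·) l (fun h : ℝ => (ρ (s + h) - ρ s) / h) :=
    Filter.IsBoundedUnder.isCoboundedUnder_le
      ⟨-(2 * B * Cγ), by simpa [Filter.eventually_map] using hlow⟩
  have hρnn : 0 ≤ ρ s := by rw [hρc]; positivity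
  calc Filter.limsup (fun h : ℝ => (ρ (s + h) - ρ s) / h) l
      ≤ Filter.limsup g l := Filter.limsup_le_limsup hev hcb hgT.isBoundedUnder_le
    _ = 2 * ⟪c, v⟫ := hgT.limsup_eq
    _ ≤ 2 * ((m * Mf * D) * ρ s) := by linarith [hinner]
    _ ≤ (2 * (m * Mf * D) + 1) * ρ s := by nlinarith
end

section
/- Let Ω be an open subset of ℝⁿ with n ≥ 2, and let X₁, …, X_m be smooth vector fields on Ω. Let u : Ω → ℝ be a nonnegative smooth function and K > 0 a constant such that for all x ∈ Ω, ∑_{j=1}^m (D²u)(x)(X_j(x), X_j(x)) ≤ −K · inf_{‖ξ‖ ≤ 1} (D²u)(x)(ξ, ξ) + K · ‖Du(x)‖ + K · u(x). Let F = {x ∈ Ω : u(x) = 0}. Then each vector field X_j is tangential to F; that is, for every x₁ ∈ F, every x₀ ∈ ℝⁿ with dist(x₀, F) = ‖x₁ − x₀‖, and every j ∈ {1, …, m}, one has ⟨x₁ − x₀, X_j(x₁)⟩ = 0. -/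
open scoped RealInnerProductSpace

/-- The Hessian of `u : ℝⁿ → ℝ` at `x`, as a bilinear form: `(D²u)(x)(ξ, η)`. -/
noncomputable def hessianForm {n : ℕ} (u : EuclideanSpace ℝ (Fin n) → ℝ)
    (x ξ η : EuclideanSpace ℝ (Fin n)) : ℝ :=
  fderiv ℝ (fderiv ℝ u) x ξ η

/-- The infimum `inf_{‖ξ‖ ≤ 1} (D²u)(x)(ξ, ξ)` over the closed unit ball. -/
noncomputable def hessianInf {n : ℕ} (u : EuclideanSpace ℝ (Fin n) → ℝ)
    (x : EuclideanSpace ℝ (Fin n)) : ℝ :=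
  sInf ((fun ξ => hessianForm u x ξ ξ) '' Metric.closedBall 0 1)

open Filter Metric Set Topology

/- ============ 1-D auxiliary lemmas ============ -/

lemma aux_right_deriv_nonneg (ψ : ℝ → ℝ) (d : ℝ) (hψ : HasDerivAt ψ d 0) (h0 : ψ 0 = 0)
    (hpos : ∀ᶠ t in 𝓝[>] (0:ℝ), 0 ≤ ψ t) : 0 ≤ d := by
  have hslope := hasDerivAt_iff_tendsto_slope.mp hψ
  have h2 : Tendsto (slope ψ 0) (𝓝[>] (0:ℝ)) (𝓝 d) :=
    hslope.mono_left (nhdsWithin_mono 0 (fun t ht => ne_of_gt ht))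
  refine ge_of_tendsto h2 ?_
  filter_upwards [hpos, self_mem_nhdsWithin] with t ht ht'
  have ht0 : (0:ℝ) < t := ht'
  have : slope ψ 0 t = t⁻¹ * ψ t := by simp [slope, h0]
  rw [this]
  positivity

lemma aux_second_deriv_nonneg (g g' : ℝ → ℝ) (c : ℝ)
    (hg' : ∀ᶠ t in 𝓝 (0:ℝ), HasDerivAt g (g' t) t)
    (h'0 : g' 0 = 0) (hg'' : HasDerivAt g' c 0)
    (hmin : ∀ᶠ t in 𝓝 (0:ℝ), g 0 ≤ g t) : 0 ≤ c := by
  by_contra hc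
  push_neg at hc
  have hslope := hasDerivAt_iff_tendsto_slope.mp hg''
  have h2 : Tendsto (slope g' 0) (𝓝[>] (0:ℝ)) (𝓝 c) :=
    hslope.mono_left (nhdsWithin_mono 0 (fun t ht => ne_of_gt ht))
  have hev : ∀ᶠ t in 𝓝[>] (0:ℝ), g' t < 0 := by
    have h3 : ∀ᶠ t in 𝓝[>] (0:ℝ), slope g' 0 t < 0 := h2.eventually_lt_const hc
    filter_upwards [h3, self_mem_nhdsWithin] with t h4 h5
    have ht0 : (0:ℝ) < t := h5
    have hs : slope g' 0 t = t⁻¹ * g' t := by simp [slope, h'0]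
    rw [hs] at h4
    have := mul_neg_of_neg_of_pos h4 ht0
    rwa [inv_mul_eq_div, div_mul_cancel₀ _ (ne_of_gt ht0)] at this
  obtain ⟨η₁, hη₁pos, hη₁⟩ := Metric.eventually_nhds_iff.mp (hg'.and hmin)
  obtain ⟨η₂, hη₂pos, hη₂⟩ := (mem_nhdsGT_iff_exists_Ioo_subset).mp hev
  have hη₂0 : (0:ℝ) < η₂ := hη₂pos
  set η := min (η₁/2) (η₂/2) with hη
  have hηpos : 0 < η := by positivity
  have hball : ∀ t ∈ Icc (0:ℝ) η, HasDerivAt g (g' t) t ∧ g 0 ≤ g t := by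
    intro t ht
    apply hη₁
    rw [Real.dist_eq, sub_zero, abs_of_nonneg ht.1]
    calc t ≤ η := ht.2
      _ < η₁ := lt_of_le_of_lt (min_le_left _ _) (by linarith)
  have hanti : StrictAntiOn g (Icc (0:ℝ) η) := by
    apply strictAntiOn_of_deriv_neg (convex_Icc 0 η)
    · intro t ht
      exact ((hball t ht).1.differentiableAt.continuousAt).continuousWithinAt
    · intro t ht
      rw [interior_Icc] at ht
      have hmem : t ∈ Ioo (0:ℝ) η₂ :=
        ⟨ht.1, lt_of_lt_of_le ht.2 (le_trans (min_le_right _ _) (by linarith))⟩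
      have hd : HasDerivAt g (g' t) t := (hball t ⟨ht.1.le, ht.2.le⟩).1
      rw [hd.deriv]
      exact hη₂ hmem
  have h5 : g η < g 0 := hanti (left_mem_Icc.mpr hηpos.le) (right_mem_Icc.mpr hηpos.le) hηpos
  exact absurd (hball η (right_mem_Icc.mpr hηpos.le)).2 (not_le.mpr h5)

section SecondTest
variable {E : Type*} [NormedAddCommGroup E] [NormedSpace ℝ E]

/-- Second-derivative test: at an interior local minimum of a `C²` function,
the Hessian is positive semidefinite. -/
lemma isLocalMin_secondDeriv_nonneg (h : E → ℝ) (y : E) (hh : ContDiffAt ℝ 2 h y)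
    (hmin : IsLocalMin h y) (ξ : E) : 0 ≤ fderiv ℝ (fderiv ℝ h) y ξ ξ := by
  obtain ⟨U, hU_mem, hU⟩ := hh.contDiffOn (le_refl 2) (by simp)
  obtain ⟨V, hVU, hVopen, hyV⟩ := _root_.mem_nhds_iff.mp hU_mem
  have hdiff : ∀ z ∈ V, DifferentiableAt ℝ h z := by
    intro z hz
    exact (hU.contDiffAt (Filter.mem_of_superset (hVopen.mem_nhds hz) hVU)).differentiableAt
      (by norm_num)
  set γ : ℝ → E := fun t => y + t • ξ with hγdef
  have hγc : Continuous γ := continuous_const.add (continuous_id.smul continuous_const)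
  have hγ0 : γ 0 = y := by simp [hγdef]
  have hγd : ∀ t, HasDerivAt γ ξ t := by
    intro t
    simpa [hγdef] using ((hasDerivAt_id t).smul_const ξ).const_add y
  have hγV : ∀ᶠ t in 𝓝 (0:ℝ), γ t ∈ V := by
    have ht : Tendsto γ (𝓝 0) (𝓝 y) := by
      rw [← hγ0]; exact hγc.continuousAt
    exact ht (hVopen.mem_nhds hyV)
  set g' : ℝ → ℝ := fun t => fderiv ℝ h (γ t) ξ with hg'def
  have hgd : ∀ᶠ t in 𝓝 (0:ℝ), HasDerivAt (fun s => h (γ s)) (g' t) t := by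
    filter_upwards [hγV] with t ht
    exact (hdiff _ ht).hasFDerivAt.comp_hasDerivAt t (hγd t)
  have h'0 : g' 0 = 0 := by
    simp [hg'def, hγ0, hmin.fderiv_eq_zero]
  have hd2 : DifferentiableAt ℝ (fderiv ℝ h) y :=
    (hh.fderiv_right (m := 1) (le_refl 2)).differentiableAt one_ne_zero
  have hψ : HasFDerivAt (fun z => fderiv ℝ h z ξ)
      ((fderiv ℝ h y).comp (0 : E →L[ℝ] E) + (fderiv ℝ (fderiv ℝ h) y).flip ξ) y :=
    hd2.hasFDerivAt.clm_apply (hasFDerivAt_const ξ y)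
  have hg'' : HasDerivAt g' (fderiv ℝ (fderiv ℝ h) y ξ ξ) 0 := by
    have hψ' : HasFDerivAt (fun z => fderiv ℝ h z ξ)
        ((fderiv ℝ h y).comp (0 : E →L[ℝ] E) + (fderiv ℝ (fderiv ℝ h) y).flip ξ) (γ 0) := by
      rw [hγ0]; exact hψ
    have hcomp := hψ'.comp_hasDerivAt 0 (hγd 0)
    refine (show HasDerivAt g' _ 0 from hcomp).congr_deriv ?_
    simp
  have hming : ∀ᶠ t in 𝓝 (0:ℝ), (fun s => h (γ s)) 0 ≤ (fun s => h (γ s)) t := by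
    have ht : Tendsto γ (𝓝 0) (𝓝 y) := by
      rw [← hγ0]; exact hγc.continuousAt
    filter_upwards [ht.eventually hmin] with t ht2
    simpa [hγ0] using ht2
  exact aux_second_deriv_nonneg _ g' _ hgd h'0 hg'' hming

end SecondTest

/- ============ Gaussian barrier ============ -/

section Barrier
variable {E : Type*} [NormedAddCommGroup E] [InnerProductSpace ℝ E]

/-- The real inner product as a continuous bilinear map. -/
noncomputable def innerCLM2 (E : Type*) [NormedAddCommGroup E] [InnerProductSpace ℝ E] :
    E →L[ℝ] E →L[ℝ] ℝ :=
  (isBoundedBilinearMap_inner (𝕜 := ℝ) (E := E)).toContinuousLinearMap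

@[simp] lemma innerCLM2_apply (ξ η : E) : innerCLM2 E ξ η = ⟪ξ, η⟫ := rfl

/-- The Gaussian barrier `exp (-l ‖x - p‖²)`. -/
noncomputable def barW (p : E) (l : ℝ) (x : E) : ℝ := Real.exp (-l * ⟪x - p, x - p⟫)

/-- First derivative of the barrier, as a continuous linear functional. -/
noncomputable def barG (p : E) (l : ℝ) (x : E) : E →L[ℝ] ℝ :=
  ((-2 * l) * barW p l x) • innerCLM2 E (x - p)

/-- Second derivative of the barrier. -/
noncomputable def barD (p : E) (l : ℝ) (x : E) : E →L[ℝ] E →L[ℝ] ℝ :=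
  ((4 * l ^ 2 * barW p l x) • (innerCLM2 E (x - p)).smulRight (innerCLM2 E (x - p))) +
    (((-2 * l) * barW p l x) • innerCLM2 E)

lemma barW_pos (p : E) (l : ℝ) (x : E) : 0 < barW p l x := Real.exp_pos _

lemma barG_apply (p : E) (l : ℝ) (x ξ : E) :
    barG p l x ξ = (-2 * l) * barW p l x * ⟪x - p, ξ⟫ := by
  simp only [barG, ContinuousLinearMap.smul_apply, innerCLM2_apply, smul_eq_mul]

lemma barD_apply (p : E) (l : ℝ) (x ξ η : E) :
    barD p l x ξ η = 4 * l ^ 2 * barW p l x * (⟪x - p, ξ⟫ * ⟪x - p, η⟫)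
      - 2 * l * barW p l x * ⟪ξ, η⟫ := by
  simp only [barD, ContinuousLinearMap.add_apply, ContinuousLinearMap.smul_apply,
    ContinuousLinearMap.smulRight_apply, innerCLM2_apply, smul_eq_mul]
  ring

lemma barW_eq (p : E) (l : ℝ) (x : E) : barW p l x = Real.exp (-l * ‖x - p‖ ^ 2) := by
  rw [barW, real_inner_self_eq_norm_sq]

lemma barW_le_one (p : E) (l : ℝ) (hl : 0 ≤ l) (x : E) : barW p l x ≤ 1 := by
  rw [barW_eq, ← Real.exp_zero]
  apply Real.exp_le_exp.mpr
  have h : (0:ℝ) ≤ ‖x - p‖ ^ 2 := by positivity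
  nlinarith

lemma hasFDerivAt_sq (p : E) (x : E) :
    HasFDerivAt (fun z : E => ⟪z - p, z - p⟫) ((2:ℝ) • innerCLM2 E (x - p)) x := by
  have hid : HasFDerivAt (fun z : E => z - p) (ContinuousLinearMap.id ℝ E) x :=
    (hasFDerivAt_id x).sub_const p
  have h1 := hid.inner ℝ hid
  refine h1.congr_fderiv ?_
  ext ξ
  simp only [fderivInnerCLM_apply, ContinuousLinearMap.comp_apply,
    ContinuousLinearMap.prod_apply, ContinuousLinearMap.coe_id', id_eq,
    ContinuousLinearMap.smul_apply, innerCLM2_apply, smul_eq_mul]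
  rw [real_inner_comm ξ (x - p)]
  ring

lemma hasFDerivAt_barW (p : E) (l : ℝ) (x : E) :
    HasFDerivAt (barW p l) (barG p l x) x := by
  have h1 : HasFDerivAt (fun z : E => -l * ⟪z - p, z - p⟫)
      ((-l) • ((2:ℝ) • innerCLM2 E (x - p))) x := (hasFDerivAt_sq p x).const_mul (-l)
  have h2 := (Real.hasDerivAt_exp (-l * ⟪x - p, x - p⟫)).comp_hasFDerivAt x h1
  have h3 : HasFDerivAt (barW p l)
      (Real.exp (-l * ⟪x - p, x - p⟫) • ((-l) • ((2:ℝ) • innerCLM2 E (x - p)))) x := h2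
  convert h3 using 1
  rw [smul_smul, smul_smul, barG]
  congr 1
  rw [barW]
  ring

lemma hasFDerivAt_barG (p : E) (l : ℝ) (x : E) :
    HasFDerivAt (barG p l) (barD p l x) x := by
  have hc : HasFDerivAt (fun z : E => (-2 * l) * barW p l z)
      ((-2 * l) • barG p l x) x := (hasFDerivAt_barW p l x).const_mul (-2 * l)
  have hid : HasFDerivAt (fun z : E => z - p) (ContinuousLinearMap.id ℝ E) x :=
    (hasFDerivAt_id x).sub_const p
  have hJ : HasFDerivAt (fun z : E => innerCLM2 E (z - p)) (innerCLM2 E) x := by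
    have h := (innerCLM2 E).hasFDerivAt.comp x hid
    simpa only [Function.comp_def, ContinuousLinearMap.comp_id] using h
  have h2 := hc.smul hJ
  refine (show HasFDerivAt (barG p l) _ x from h2).congr_fderiv ?_
  ext ξ η
  simp only [barD, barG, ContinuousLinearMap.add_apply, ContinuousLinearMap.smul_apply,
    ContinuousLinearMap.smulRight_apply, innerCLM2_apply, smul_eq_mul]
  ring

lemma contDiff_barW (p : E) (l : ℝ) : ContDiff ℝ 2 (barW p l) := by
  have h1 : ContDiff ℝ 2 (fun z : E => -l * ⟪z - p, z - p⟫) :=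
    contDiff_const.mul (ContDiff.inner ℝ (contDiff_id.sub contDiff_const)
      (contDiff_id.sub contDiff_const))
  exact Real.contDiff_exp.comp h1

end Barrier

/- ============ main statement ============ -/

set_option maxHeartbeats 2000000 in
/-- Tangency of the vector fields `X₁, …, X_m` to the zero set `F = {u = 0}`: for every
`x₁ ∈ F` and every `x₀` with `dist(x₀, F) = ‖x₁ - x₀‖`, one has
`⟪x₁ - x₀, Xⱼ(x₁)⟫ = 0` for all `j`. -/
theorem vector_fields_tangential_to_zero_set {n m : ℕ} (hn : 2 ≤ n)
    (Ω : Set (EuclideanSpace ℝ (Fin n))) (hΩ : IsOpen Ω)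
    (X : Fin m → EuclideanSpace ℝ (Fin n) → EuclideanSpace ℝ (Fin n))
    (hX : ∀ j, ContDiffOn ℝ (⊤ : ℕ∞) (X j) Ω)
    (u : EuclideanSpace ℝ (Fin n) → ℝ)
    (hu : ContDiffOn ℝ (⊤ : ℕ∞) u Ω)
    (hu0 : ∀ x ∈ Ω, 0 ≤ u x)
    (K : ℝ) (hK : 0 < K)
    (hineq : ∀ x ∈ Ω,
      ∑ j, hessianForm u x (X j x) (X j x)
        ≤ -K * hessianInf u x + K * ‖gradient u x‖ + K * u x)
    (F : Set (EuclideanSpace ℝ (Fin n))) (hF : F = {x ∈ Ω | u x = 0}) :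
    ∀ x₁ ∈ F, ∀ x₀ : EuclideanSpace ℝ (Fin n),
      Metric.infDist x₀ F = ‖x₁ - x₀‖ → ∀ j, ⟪x₁ - x₀, X j x₁⟫ = 0 := by
  intro x₁ hx₁ x₀ hdist j
  by_contra hA0
  have hx₁Ω : x₁ ∈ Ω := by rw [hF] at hx₁; exact hx₁.1
  have hux₁ : u x₁ = 0 := by rw [hF] at hx₁; exact hx₁.2
  -- basic geometric data
  have hvne : x₁ - x₀ ≠ 0 := by
    intro h; exact hA0 (by rw [h, inner_zero_left])
  set r : ℝ := ‖x₁ - x₀‖ with hr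
  have hrpos : 0 < r := norm_pos_iff.mpr hvne
  obtain ⟨δ₀, hδ₀pos, hδ₀⟩ : ∃ δ₀ > 0, closedBall x₁ δ₀ ⊆ Ω := by
    obtain ⟨δ, hδpos, hδ⟩ := Metric.isOpen_iff.mp hΩ x₁ hx₁Ω
    exact ⟨δ/2, by positivity, (closedBall_subset_ball (by linarith)).trans hδ⟩
  set ϱ : ℝ := r/2 with hϱ
  have hϱpos : 0 < ϱ := by positivity
  set p := x₁ - (2⁻¹ : ℝ) • (x₁ - x₀) with hp
  have hx₁p : x₁ - p = (2⁻¹ : ℝ) • (x₁ - x₀) := by rw [hp]; module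
  have hnx₁p : ‖x₁ - p‖ = ϱ := by
    rw [hx₁p, norm_smul, Real.norm_eq_abs, abs_of_nonneg (by norm_num : (0:ℝ) ≤ (2⁻¹:ℝ)),
      ← hr, hϱ]
    ring
  have hpx₀ : p - x₀ = (2⁻¹ : ℝ) • (x₁ - x₀) := by rw [hp]; module
  have hnpx₀ : ‖p - x₀‖ = ϱ := by
    rw [hpx₀, norm_smul, Real.norm_eq_abs, abs_of_nonneg (by norm_num : (0:ℝ) ≤ (2⁻¹:ℝ)),
      ← hr, hϱ]
    ring
  -- F-points in the small closed ball must be x₁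
  have hFkey : ∀ z ∈ F, ‖z - p‖ ≤ ϱ → z = x₁ := by
    intro z hz hzp
    have hzr : r ≤ ‖z - x₀‖ := by
      have h1 : Metric.infDist x₀ F ≤ dist x₀ z := Metric.infDist_le_dist_of_mem hz
      rw [hdist] at h1
      rwa [dist_eq_norm, norm_sub_rev] at h1
    have hdecomp : z - x₀ = (z - p) + (p - x₀) := by abel
    have h2 : ‖z - x₀‖^2 = ‖z - p‖^2 + 2*⟪z - p, p - x₀⟫ + ‖p - x₀‖^2 := by
      rw [hdecomp, norm_add_sq_real]
    have hinner : ϱ * ϱ ≤ ⟪z - p, p - x₀⟫ := by nlinarith [norm_nonneg (z - p)]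
    have hCS : ⟪z - p, p - x₀⟫ ≤ ‖z - p‖ * ‖p - x₀‖ := real_inner_le_norm _ _
    have hnzp : ‖z - p‖ = ϱ := by nlinarith
    have heq : ⟪z - p, p - x₀⟫ = ‖z - p‖ * ‖p - x₀‖ := by
      rw [hnzp, hnpx₀]; nlinarith
    have hray := inner_eq_norm_mul_iff_real.mp heq
    rw [hnzp, hnpx₀] at hray
    -- ϱ • (z - p) = ϱ • (p - x₀)
    have hzp_eq : z - p = p - x₀ := smul_right_injective (EuclideanSpace ℝ (Fin n)) (ne_of_gt hϱpos) hray
    rw [hpx₀] at hzp_eq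
    have : z = p + (2⁻¹ : ℝ) • (x₁ - x₀) := by
      rw [← hzp_eq]; abel
    rw [this, hp]; module
  -- continuity data
  have hXc : ContinuousAt (X j) x₁ := ((hX j).continuousOn.continuousAt (hΩ.mem_nhds hx₁Ω))
  set A' : ℝ := ⟪x₁ - p, X j x₁⟫ with hA'
  have hA'ne : A' ≠ 0 := by
    rw [hA', hx₁p, real_inner_smul_left]
    intro h
    rcases mul_eq_zero.mp h with h | h
    · norm_num at h
    · exact hA0 h
  set c : ℝ := A'^2/4 with hcdef
  have hcpos : 0 < c := by
    rw [hcdef]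
    have := sq_pos_of_ne_zero hA'ne
    positivity
  obtain ⟨δ₁, hδ₁pos, hδ₁⟩ : ∃ δ₁ > 0, ∀ x ∈ closedBall x₁ δ₁, c ≤ ⟪x - p, X j x⟫^2 := by
    have hφc : ContinuousAt (fun x => ⟪x - p, X j x⟫) x₁ :=
      (continuousAt_id.sub continuousAt_const).inner hXc
    obtain ⟨ε', hε'pos, hball⟩ := Metric.continuousAt_iff.mp hφc (|A'|/2)
      (by positivity)
    refine ⟨ε'/2, by positivity, fun x hx => ?_⟩
    have hd : dist x x₁ < ε' := lt_of_le_of_lt (mem_closedBall.mp hx) (by linarith)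
    have h1 := hball hd
    rw [Real.dist_eq] at h1
    have h2 : |A'| - |⟪x - p, X j x⟫| ≤ |A' - ⟪x - p, X j x⟫| := abs_sub_abs_le_abs_sub _ _
    rw [abs_sub_comm] at h1
    have h3 : |A'|/2 ≤ |⟪x - p, X j x⟫| := by linarith
    have h4 : (|A'|/2)^2 ≤ |⟪x - p, X j x⟫|^2 := by
      apply pow_le_pow_left₀ (by positivity) h3
    rw [sq_abs] at h4
    calc c = (|A'|/2)^2 := by rw [hcdef, div_pow, sq_abs]; ring
      _ ≤ _ := h4
  -- bound on the vector fields
  have hQc : ContinuousOn (fun x => ∑ i, ‖X i x‖^2) (closedBall x₁ δ₀) := by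
    apply continuousOn_finset_sum
    intro i _
    exact (((hX i).continuousOn.mono hδ₀).norm.pow 2)
  obtain ⟨zB, hzB, hzBmax⟩ := (isCompact_closedBall x₁ δ₀).exists_isMaxOn
    ⟨x₁, mem_closedBall_self hδ₀pos.le⟩ hQc
  set B : ℝ := ∑ i, ‖X i zB‖^2 with hBdef
  have hB : ∀ x ∈ closedBall x₁ δ₀, ∑ i, ‖X i x‖^2 ≤ B := fun x hx => hzBmax hx
  have hBnn : 0 ≤ B := by
    have h1 : (0:ℝ) ≤ ∑ i, ‖X i x₁‖^2 := Finset.sum_nonneg (fun i _ => sq_nonneg _)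
    exact h1.trans (hB x₁ (mem_closedBall_self hδ₀pos.le))
  -- choice of δ and λ
  set δ : ℝ := min δ₁ (min δ₀ ϱ) with hδdef
  have hδpos : 0 < δ := lt_min hδ₁pos (lt_min hδ₀pos hϱpos)
  have hδδ₁ : δ ≤ δ₁ := min_le_left _ _
  have hδδ₀ : δ ≤ δ₀ := (min_le_right _ _).trans (min_le_left _ _)
  have hδϱ : δ ≤ ϱ := (min_le_right _ _).trans (min_le_right _ _)
  set lam : ℝ := max 1 ((2*B + 3*K + 2*K*ϱ + 1)/(4*c)) with hlamdef
  have hlam1 : 1 ≤ lam := le_max_left _ _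
  have hlampos : 0 < lam := lt_of_lt_of_le one_pos hlam1
  have hlamc : 2*B + 3*K + 2*K*ϱ + 1 ≤ 4*lam*c := by
    have h1 : (2*B + 3*K + 2*K*ϱ + 1)/(4*c) ≤ lam := le_max_right _ _
    rw [div_le_iff₀ (by positivity)] at h1
    nlinarith
  -- the compact region and Γ
  set Γ := sphere x₁ δ ∩ closedBall p ϱ with hΓdef
  have hq₀ : x₁ + (δ/ϱ) • (p - x₁) ∈ Γ := by
    constructor
    · rw [mem_sphere, dist_eq_norm]
      have : x₁ + (δ/ϱ) • (p - x₁) - x₁ = (δ/ϱ) • (p - x₁) := by abel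
      rw [this, norm_smul, Real.norm_eq_abs, abs_of_nonneg (by positivity), norm_sub_rev, hnx₁p]
      field_simp
    · rw [mem_closedBall, dist_eq_norm]
      have h1 : x₁ + (δ/ϱ) • (p - x₁) - p = (1 - δ/ϱ) • (x₁ - p) := by module
      rw [h1, norm_smul, Real.norm_eq_abs, hnx₁p]
      have h2 : 0 ≤ 1 - δ/ϱ := by
        rw [sub_nonneg, div_le_one hϱpos]; exact hδϱ
      rw [abs_of_nonneg h2]
      have h3 : 0 ≤ δ/ϱ := div_nonneg hδpos.le hϱpos.le
      nlinarith
  have hΓΩ : Γ ⊆ Ω := by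
    intro z hz
    apply hδ₀
    exact closedBall_subset_closedBall hδδ₀ (sphere_subset_closedBall hz.1)
  have hΓcpt : IsCompact Γ := (isCompact_sphere x₁ δ).inter_right Metric.isClosed_closedBall
  obtain ⟨zμ, hzμΓ, hzμ⟩ := hΓcpt.exists_isMinOn ⟨_, hq₀⟩ (hu.continuousOn.mono hΓΩ)
  set ε : ℝ := u zμ with hεdef
  have hεpos : 0 < ε := by
    rcases lt_or_eq_of_le (hu0 zμ (hΓΩ hzμΓ)) with h | h
    · exact h
    · exfalso
      have hzμF : zμ ∈ F := by rw [hF]; exact ⟨hΓΩ hzμΓ, h.symm⟩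
      have h2 := hFkey zμ hzμF (by rw [← dist_eq_norm]; exact mem_closedBall.mp hzμΓ.2)
      have h3 : dist zμ x₁ = δ := mem_sphere.mp hzμΓ.1
      rw [h2] at h3
      simp at h3
      exact absurd h3.symm (ne_of_gt hδpos)
  -- the region C
  set Cset := closedBall p ϱ ∩ closedBall x₁ δ with hCdef
  have hCΩ : Cset ⊆ Ω := fun z hz => hδ₀ (closedBall_subset_closedBall hδδ₀ hz.2)
  have hCcpt : IsCompact Cset := (isCompact_closedBall p ϱ).inter_right Metric.isClosed_closedBall
  have hx₁C : x₁ ∈ Cset := by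
    constructor
    · rw [mem_closedBall, dist_eq_norm, hnx₁p]
    · exact mem_closedBall_self hδpos.le
  set W₀ := Real.exp (-lam * ϱ^2) with hW₀def
  have hW₀pos : 0 < W₀ := Real.exp_pos _
  have hWx₁ : barW p lam x₁ = W₀ := by
    rw [barW_eq, hnx₁p, hW₀def]
  set h := fun x => u x - ε * (barW p lam x - W₀) with hhdef
  have hhc : ContinuousOn h Cset :=
    (hu.continuousOn.mono hCΩ).sub
      ((continuous_const.mul ((contDiff_barW p lam).continuous.sub continuous_const)).continuousOn)
  obtain ⟨y, hyC, hymin⟩ := hCcpt.exists_isMinOn ⟨x₁, hx₁C⟩ hhc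
  -- differentiability of u at points of Ω
  have hud : ∀ z ∈ Ω, DifferentiableAt ℝ u z := fun z hz =>
    (hu.contDiffAt (hΩ.mem_nhds hz)).differentiableAt (by simp)
  have hfdh : ∀ z ∈ Ω, HasFDerivAt h (fderiv ℝ u z - ε • barG p lam z) z := by
    intro z hz
    exact (hud z hz).hasFDerivAt.sub
      (((hasFDerivAt_barW p lam z).sub_const W₀).const_mul ε)
  have hhx₁ : h x₁ = 0 := by
    rw [hhdef]; simp [hWx₁, hux₁]
  rcases le_or_gt 0 (h y) with hcase | hcase
  · -- case (a) : Hopf boundary-point argument at x₁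
    have hminu : IsLocalMin u x₁ := by
      have : ∀ᶠ z in 𝓝 x₁, u x₁ ≤ u z := by
        filter_upwards [hΩ.mem_nhds hx₁Ω] with z hz
        rw [hux₁]; exact hu0 z hz
      exact this
    have hu'0 : fderiv ℝ u x₁ = 0 := hminu.fderiv_eq_zero
    set e' := ϱ⁻¹ • (p - x₁) with he'
    have hip : ⟪x₁ - p, e'⟫ = -ϱ := by
      rw [he', real_inner_smul_right]
      have h1 : p - x₁ = -(x₁ - p) := by abel
      rw [h1, inner_neg_right, real_inner_self_eq_norm_sq, hnx₁p]
      field_simp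
    -- derivative of ψ at 0
    set ψ := fun t : ℝ => h (x₁ + t • e') with hψdef
    have hγd : ∀ t : ℝ, HasDerivAt (fun s : ℝ => x₁ + s • e') e' t := by
      intro t
      simpa using ((hasDerivAt_id t).smul_const e').const_add x₁
    have hψd : HasDerivAt ψ ((fderiv ℝ u x₁ - ε • barG p lam x₁) e') 0 := by
      have h1 : HasFDerivAt h (fderiv ℝ u x₁ - ε • barG p lam x₁)
          ((fun s : ℝ => x₁ + s • e') 0) := by
        rw [show (fun s : ℝ => x₁ + s • e') 0 = x₁ from by
          show x₁ + (0:ℝ) • e' = x₁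
          rw [zero_smul, add_zero]]
        exact hfdh x₁ hx₁Ω
      exact h1.comp_hasDerivAt 0 (hγd 0)
    have hval : (fderiv ℝ u x₁ - ε • barG p lam x₁) e' = -(ε * (2 * lam * ϱ * W₀)) := by
      rw [ContinuousLinearMap.sub_apply, hu'0, ContinuousLinearMap.zero_apply,
        ContinuousLinearMap.smul_apply, barG_apply, hip, hWx₁, zero_sub, smul_eq_mul]
      ring
    have hψ0 : ψ 0 = 0 := by
      rw [hψdef]; simpa using hhx₁
    have hψpos : ∀ᶠ t in 𝓝[>] (0:ℝ), 0 ≤ ψ t := by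
      have hmem : Ioo (0:ℝ) (min δ ϱ) ∈ 𝓝[>] (0:ℝ) :=
        Ioo_mem_nhdsGT_of_mem ⟨le_refl 0, lt_min hδpos hϱpos⟩
      filter_upwards [hmem] with t ht
      have ht0 : 0 < t := ht.1
      have htδ : t < δ := lt_of_lt_of_le ht.2 (min_le_left _ _)
      have htϱ : t < ϱ := lt_of_lt_of_le ht.2 (min_le_right _ _)
      have hxt : x₁ + t • e' ∈ Cset := by
        constructor
        · rw [mem_closedBall, dist_eq_norm]
          have h1 : x₁ + t • e' - p = (1 - t * ϱ⁻¹) • (x₁ - p) := by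
            rw [he']; module
          rw [h1, norm_smul, Real.norm_eq_abs, hnx₁p]
          have h2 : 0 ≤ 1 - t * ϱ⁻¹ := by
            rw [sub_nonneg]
            rw [← div_eq_mul_inv, div_le_one hϱpos]
            exact htϱ.le
          rw [abs_of_nonneg h2]
          have h3 : (1 - t * ϱ⁻¹) * ϱ = ϱ - t := by field_simp
          rw [h3]; linarith
        · rw [mem_closedBall, dist_eq_norm]
          have h1 : x₁ + t • e' - x₁ = t • e' := by abel
          rw [h1, norm_smul, Real.norm_eq_abs, abs_of_nonneg ht0.le, he', norm_smul]
          rw [Real.norm_eq_abs, abs_of_nonneg (by positivity : (0:ℝ) ≤ ϱ⁻¹), norm_sub_rev, hnx₁p]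
          rw [inv_mul_cancel₀ (ne_of_gt hϱpos), mul_one]
          exact htδ.le
      have := hymin hxt
      calc (0:ℝ) ≤ h y := hcase
        _ ≤ h (x₁ + t • e') := this
    have hd0 := aux_right_deriv_nonneg ψ _ hψd hψ0 hψpos
    rw [hval] at hd0
    have : 0 < ε * (2 * lam * ϱ * W₀) := by positivity
    linarith
  · -- case (b) : interior minimum, contradiction with the differential inequality
    have hyΩ : y ∈ Ω := hCΩ hyC
    -- y is in the interior
    have hyp : ‖y - p‖ < ϱ := by
      rcases lt_or_eq_of_le (mem_closedBall.mp hyC.1) with h1 | h1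
      · rwa [dist_eq_norm] at h1
      · exfalso
        have hWy : barW p lam y = W₀ := by
          rw [barW_eq, hW₀def]
          rw [← dist_eq_norm, h1]
        have : h y = u y := by rw [hhdef]; simp [hWy]
        rw [this] at hcase
        exact absurd (hu0 y hyΩ) (not_le.mpr hcase)
    have hyx₁ : ‖y - x₁‖ < δ := by
      rcases lt_or_eq_of_le (mem_closedBall.mp hyC.2) with h1 | h1
      · rwa [dist_eq_norm] at h1
      · exfalso
        have hyΓ : y ∈ Γ := ⟨mem_sphere.mpr h1, hyC.1⟩
        have h2 : ε ≤ u y := hzμ hyΓ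
        have h3 : barW p lam y ≤ 1 := barW_le_one p lam (by positivity) y
        have : 0 < h y := by
          rw [hhdef]
          simp only
          nlinarith
        linarith
    have hlocmin : IsLocalMin h y := by
      apply hymin.isLocalMin
      apply Filter.mem_of_superset (((isOpen_ball).inter isOpen_ball).mem_nhds _)
      · exact inter_subset_inter ball_subset_closedBall ball_subset_closedBall
      · constructor
        · rw [mem_ball, dist_eq_norm]; exact hyp
        · rw [mem_ball, dist_eq_norm]; exact hyx₁
    -- smoothness of h at y
    have hhC2 : ContDiffAt ℝ 2 h y := by
      apply ContDiffAt.sub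
      · exact (hu.contDiffAt (hΩ.mem_nhds hyΩ)).of_le (WithTop.coe_le_coe.mpr le_top)
      · exact (contDiff_const.mul ((contDiff_barW p lam).sub contDiff_const)).contDiffAt
    -- first-order condition
    have hgrad : fderiv ℝ u y = ε • barG p lam y := by
      have h1 := hlocmin.hasFDerivAt_eq_zero (hfdh y hyΩ)
      rwa [sub_eq_zero] at h1
    -- second-order condition
    have hsecond := isLocalMin_secondDeriv_nonneg h y hhC2 hlocmin
    -- Hessian decomposition
    have hfeq : fderiv ℝ h =ᶠ[𝓝 y] fun z => fderiv ℝ u z - ε • barG p lam z := by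
      filter_upwards [hΩ.mem_nhds hyΩ] with z hz
      exact (hfdh z hz).fderiv
    have hd2u : DifferentiableAt ℝ (fderiv ℝ u) y :=
      ((hu.contDiffAt (hΩ.mem_nhds hyΩ)).fderiv_right (m := 1) (WithTop.coe_le_coe.mpr le_top)).differentiableAt one_ne_zero
    have hD2 : fderiv ℝ (fderiv ℝ h) y = fderiv ℝ (fderiv ℝ u) y - ε • barD p lam y := by
      rw [hfeq.fderiv_eq]
      exact (hd2u.hasFDerivAt.sub ((hasFDerivAt_barG p lam y).const_smul ε)).fderiv
    have hHess : ∀ ξ, ε * (barD p lam y ξ ξ) ≤ fderiv ℝ (fderiv ℝ u) y ξ ξ := by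
      intro ξ
      have h0 := hsecond ξ
      rw [hD2] at h0
      simp only [ContinuousLinearMap.sub_apply, ContinuousLinearMap.smul_apply,
        smul_eq_mul] at h0
      linarith
    have hWypos : 0 < barW p lam y := barW_pos p lam y
    -- bound : u y ≤ ε * Wy
    have huyle : u y ≤ ε * barW p lam y := by
      have h0 : u y - ε * (barW p lam y - W₀) < 0 := hcase
      have h00 : 0 < ε * W₀ := mul_pos hεpos hW₀pos
      nlinarith [h0, h00]
    -- bound on the gradient
    have hgradb : ‖gradient u y‖ ≤ 2*lam*ε*ϱ*(barW p lam y) := by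
      have h1 : ‖gradient u y‖ = ‖fderiv ℝ u y‖ := by
        rw [gradient, LinearIsometryEquiv.norm_map]
      rw [h1, hgrad, norm_smul, Real.norm_eq_abs, abs_of_pos hεpos]
      have hWnn : (0:ℝ) ≤ 2*lam*barW p lam y :=
        mul_nonneg (by linarith : (0:ℝ) ≤ 2*lam) (barW_pos p lam y).le
      have h2 : ‖barG p lam y‖ ≤ 2*lam*(barW p lam y)*ϱ := by
        apply ContinuousLinearMap.opNorm_le_bound _
          (mul_nonneg hWnn hϱpos.le)
        intro ξ
        rw [barG_apply, Real.norm_eq_abs]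
        have h7 : |(-2 * lam) * barW p lam y * ⟪y - p, ξ⟫|
            = 2*lam*barW p lam y * |⟪y - p, ξ⟫| := by
          rw [abs_mul, abs_mul, abs_of_nonpos (by linarith : (-2)*lam ≤ 0),
            abs_of_pos (barW_pos p lam y)]
          ring
        rw [h7]
        have hCS := abs_real_inner_le_norm (y - p) ξ
        have h8 : |⟪y - p, ξ⟫| ≤ ϱ * ‖ξ‖ :=
          hCS.trans (mul_le_mul_of_nonneg_right hyp.le (norm_nonneg ξ))
        linarith [mul_le_mul_of_nonneg_left h8 hWnn]
      linarith [mul_le_mul_of_nonneg_left h2 hεpos.le]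
    -- bound on hessianInf
    have hInf : -(2*lam*ε*(barW p lam y)) ≤ hessianInf u y := by
      rw [hessianInf]
      apply le_csInf
      · exact ⟨_, Set.mem_image_of_mem _ (mem_closedBall_self zero_le_one)⟩
      · rintro b ⟨ξ, hξ, rfl⟩
        have hξ1 : ‖ξ‖ ≤ 1 := mem_closedBall_zero_iff.mp hξ
        have h1 := hHess ξ
        have h2 : barD p lam y ξ ξ = 4*lam^2*(barW p lam y)*(⟪y - p, ξ⟫*⟪y - p, ξ⟫)
            - 2*lam*(barW p lam y)*‖ξ‖^2 := by
          rw [barD_apply, real_inner_self_eq_norm_sq]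
        rw [h2] at h1
        show -(2*lam*ε*(barW p lam y)) ≤ fderiv ℝ (fderiv ℝ u) y ξ ξ
        have hsq : ‖ξ‖^2 ≤ 1 := pow_le_one₀ (norm_nonneg ξ) hξ1
        have hWnn : (0:ℝ) ≤ ε * (2*lam*barW p lam y) :=
          mul_nonneg hεpos.le
            (mul_nonneg (by linarith : (0:ℝ) ≤ 2*lam) (barW_pos p lam y).le)
        have hkey : (0:ℝ) ≤ ε * (2*lam*barW p lam y) * (1 - ‖ξ‖^2) :=
          mul_nonneg hWnn (by linarith)
        have hkey2 : (0:ℝ) ≤ ε * (4*lam^2*barW p lam y) * (⟪y - p, ξ⟫*⟪y - p, ξ⟫) :=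
          mul_nonneg (mul_nonneg hεpos.le
            (mul_nonneg (by positivity : (0:ℝ) ≤ 4*lam^2) (barW_pos p lam y).le))
            (mul_self_nonneg _)
        linarith [h1, hkey, hkey2]
    -- lower bound on the sum
    have hyδ₁ : y ∈ closedBall x₁ δ₁ := by
      rw [mem_closedBall, dist_eq_norm]
      exact hyx₁.le.trans hδδ₁
    have hyδ₀ : y ∈ closedBall x₁ δ₀ := by
      rw [mem_closedBall, dist_eq_norm]
      exact hyx₁.le.trans hδδ₀
    have hqj : c ≤ ⟪y - p, X j y⟫^2 := hδ₁ y hyδ₁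
    have hS₁ : c ≤ ∑ i, ⟪y - p, X i y⟫^2 := by
      refine hqj.trans ?_
      exact Finset.single_le_sum (f := fun i => ⟪y - p, X i y⟫^2)
        (fun i _ => sq_nonneg _) (Finset.mem_univ j)
    have hS₂ : ∑ i, ‖X i y‖^2 ≤ B := hB y hyδ₀
    have hsum : ε * (barW p lam y) * (4*lam^2*c - 2*lam*B)
        ≤ ∑ i, hessianForm u y (X i y) (X i y) := by
      have e1 : ∀ i : Fin m,
          ε * (4*lam^2*(barW p lam y)*(⟪y - p, X i y⟫^2) - 2*lam*(barW p lam y)*‖X i y‖^2)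
          ≤ hessianForm u y (X i y) (X i y) := by
        intro i
        have h1 := hHess (X i y)
        have h2 : barD p lam y (X i y) (X i y)
            = 4*lam^2*(barW p lam y)*(⟪y - p, X i y⟫^2) - 2*lam*(barW p lam y)*‖X i y‖^2 := by
          rw [barD_apply, real_inner_self_eq_norm_sq]
          ring
        rw [h2] at h1
        exact h1
      have k1 : (0:ℝ) ≤ ε * barW p lam y := le_of_lt (mul_pos hεpos (barW_pos p lam y))
      calc ε * (barW p lam y) * (4*lam^2*c - 2*lam*B)
          ≤ ε * (barW p lam y)
            * (4*lam^2*(∑ i, ⟪y - p, X i y⟫^2) - 2*lam*(∑ i, ‖X i y‖^2)) := by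
            linarith [mul_le_mul_of_nonneg_left hS₁
                (mul_nonneg k1 (by positivity : (0:ℝ) ≤ 4*lam^2)),
              mul_le_mul_of_nonneg_left hS₂
                (mul_nonneg k1 (by positivity : (0:ℝ) ≤ 2*lam))]
        _ = ∑ i, ε * (4*lam^2*(barW p lam y)*(⟪y - p, X i y⟫^2)
              - 2*lam*(barW p lam y)*‖X i y‖^2) := by
            rw [Finset.mul_sum (a := (4:ℝ)*lam^2), Finset.mul_sum (a := (2:ℝ)*lam)]
            rw [← Finset.sum_sub_distrib, Finset.mul_sum]
            apply Finset.sum_congr rfl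
            intro i _
            ring
        _ ≤ ∑ i, hessianForm u y (X i y) (X i y) := Finset.sum_le_sum (fun i _ => e1 i)
    -- the differential inequality at y
    have hIy := hineq y hyΩ
    have hchain : ε * (barW p lam y) * (4*lam^2*c - 2*lam*B)
        ≤ ε * (barW p lam y) * (2*K*lam + 2*K*lam*ϱ + K) := by
      have t1 : -K * hessianInf u y ≤ K * (2*lam*ε*(barW p lam y)) :=
        by linarith [mul_le_mul_of_nonneg_left hInf hK.le]
      have t2 : K * ‖gradient u y‖ ≤ K * (2*lam*ε*ϱ*(barW p lam y)) :=
        mul_le_mul_of_nonneg_left hgradb hK.le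
      have t3 : K * u y ≤ K * (ε*(barW p lam y)) :=
        mul_le_mul_of_nonneg_left huyle hK.le
      have t4 := hsum.trans hIy
      linarith [t1, t2, t3, t4]
    have hmain : 4*lam^2*c - 2*lam*B ≤ 2*K*lam + 2*K*lam*ϱ + K := by
      have hεWy : 0 < ε * barW p lam y := mul_pos hεpos (barW_pos p lam y)
      exact le_of_mul_le_mul_left (by linarith) hεWy
    linarith [mul_le_mul_of_nonneg_left hlamc (le_of_lt hlampos),
      mul_le_mul_of_nonneg_left hlam1 hK.le, hmain, hlam1, hK]
end

section
/- Let V be a real inner product space and let R : V × V × V × V → ℝ be an algebraic curvature tensor. Let λ, μ ∈ ℝ and let v₁, v₂, v₃, v₄ ∈ V be orthonormal vectors. Suppose that the following three equations hold: (1) R(v₁,v₃,v₁,v₃) + λ²·R(v₁,v₄,v₁,v₄) + μ²·R(v₂,v₃,v₂,v₃) + λ²μ²·R(v₂,v₄,v₂,v₄) − 2λμ·R(v₁,v₂,v₃,v₄) = 0; (2) R(v₁,v₂,v₁,v₂) + λ²·R(v₂,v₄,v₂,v₄) + μ²·R(v₁,v₃,v₁,v₃) + λ²μ²·R(v₃,v₄,v₃,v₄)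 − 2λμ·R(v₂,v₃,v₁,v₄) = 0; (3) R(v₂,v₃,v₂,v₃) + λ²·R(v₃,v₄,v₃,v₄) + μ²·R(v₁,v₂,v₁,v₂) + λ²μ²·R(v₁,v₄,v₁,v₄) − 2λμ·R(v₃,v₁,v₂,v₄) = 0. Then [R(v₁,v₂,v₁,v₂) + R(v₁,v₃,v₁,v₃) + R(v₂,v₃,v₂,v₃)] + λ²·[R(v₁,v₄,v₁,v₄) + R(v₂,v₄,v₂,v₄) + R(v₃,v₄,v₃,v₄)] = 0. -/
open scoped RealInnerProductSpace

/-- An algebraic curvature tensor on a real inner product space `V`: a multilinear map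
`R : V × V × V × V → ℝ` that is antisymmetric in the first and last pairs of arguments,
symmetric under interchange of the two pairs, and satisfies the first Bianchi identity. -/
structure IsAlgCurvTensor {V : Type*} [NormedAddCommGroup V] [InnerProductSpace ℝ V]
    (R : V → V → V → V → ℝ) : Prop where
  linear_fst : ∀ y z w, IsLinearMap ℝ fun x => R x y z w
  linear_snd : ∀ x z w, IsLinearMap ℝ fun y => R x y z w
  linear_trd : ∀ x y w, IsLinearMap ℝ fun z => R x y z w
  linear_fth : ∀ x y z, IsLinearMap ℝ fun w => R x y z w
  antisymm_fst : ∀ x y z w, R x y z w = -R y x z w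
  antisymm_snd : ∀ x y z w, R x y z w = -R x y w z
  pair_symm : ∀ x y z w, R x y z w = R z w x y
  bianchi : ∀ x y z w, R x y z w + R y z x w + R z x y w = 0

/- Summing the three identities, the curvature terms collect into `(1 + μ²)` times the
left-hand side of the claim, while the mixed terms add up to `-2λμ` times the cyclic sum of
the first Bianchi identity, which vanishes. -/

theorem sum_isotropic_expressions_eq_of_bianchi {V : Type*} (R : V → V → V → V → ℝ)
    (l m : ℝ) (v₁ v₂ v₃ v₄ : V)
    (hb : R v₁ v₂ v₃ v₄ + R v₂ v₃ v₁ v₄ + R v₃ v₁ v₂ v₄ = 0) :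
    (R v₁ v₃ v₁ v₃ + l ^ 2 * R v₁ v₄ v₁ v₄ + m ^ 2 * R v₂ v₃ v₂ v₃
        + l ^ 2 * m ^ 2 * R v₂ v₄ v₂ v₄ - 2 * l * m * R v₁ v₂ v₃ v₄)
      + (R v₁ v₂ v₁ v₂ + l ^ 2 * R v₂ v₄ v₂ v₄ + m ^ 2 * R v₁ v₃ v₁ v₃
        + l ^ 2 * m ^ 2 * R v₃ v₄ v₃ v₄ - 2 * l * m * R v₂ v₃ v₁ v₄)
      + (R v₂ v₃ v₂ v₃ + l ^ 2 * R v₃ v₄ v₃ v₄ + m ^ 2 * R v₁ v₂ v₁ v₂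
        + l ^ 2 * m ^ 2 * R v₁ v₄ v₁ v₄ - 2 * l * m * R v₃ v₁ v₂ v₄)
      = (1 + m ^ 2) * ((R v₁ v₂ v₁ v₂ + R v₁ v₃ v₁ v₃ + R v₂ v₃ v₂ v₃)
          + l ^ 2 * (R v₁ v₄ v₁ v₄ + R v₂ v₄ v₂ v₄ + R v₃ v₄ v₃ v₄)) := by
  linear_combination (-2 * l * m) * hb

theorem sum_of_three_isotropic_identities_general
    {V : Type*} [NormedAddCommGroup V] [InnerProductSpace ℝ V]
    (R : V → V → V → V → ℝ) (hR : IsAlgCurvTensor R)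
    (l m : ℝ) (v₁ v₂ v₃ v₄ : V)
    (h1 : R v₁ v₃ v₁ v₃ + l ^ 2 * R v₁ v₄ v₁ v₄ + m ^ 2 * R v₂ v₃ v₂ v₃
        + l ^ 2 * m ^ 2 * R v₂ v₄ v₂ v₄ - 2 * l * m * R v₁ v₂ v₃ v₄ = 0)
    (h2 : R v₁ v₂ v₁ v₂ + l ^ 2 * R v₂ v₄ v₂ v₄ + m ^ 2 * R v₁ v₃ v₁ v₃
        + l ^ 2 * m ^ 2 * R v₃ v₄ v₃ v₄ - 2 * l * m * R v₂ v₃ v₁ v₄ = 0)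
    (h3 : R v₂ v₃ v₂ v₃ + l ^ 2 * R v₃ v₄ v₃ v₄ + m ^ 2 * R v₁ v₂ v₁ v₂
        + l ^ 2 * m ^ 2 * R v₁ v₄ v₁ v₄ - 2 * l * m * R v₃ v₁ v₂ v₄ = 0) :
    (R v₁ v₂ v₁ v₂ + R v₁ v₃ v₁ v₃ + R v₂ v₃ v₂ v₃)
      + l ^ 2 * (R v₁ v₄ v₁ v₄ + R v₂ v₄ v₂ v₄ + R v₃ v₄ v₃ v₄) = 0 := by
  have hsum := sum_isotropic_expressions_eq_of_bianchi R l m v₁ v₂ v₃ v₄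
    (hR.bianchi v₁ v₂ v₃ v₄)
  rw [h1, h2, h3, add_zero, add_zero, eq_comm] at hsum
  exact (mul_eq_zero.mp hsum).resolve_left (by positivity)

/-- Adding the three vanishing modified isotropic curvature identities and dividing by
`1 + μ²` yields the vanishing of the sum of the six sectional curvature terms. -/
theorem sum_of_three_isotropic_identities
    {V : Type*} [NormedAddCommGroup V] [InnerProductSpace ℝ V]
    (R : V → V → V → V → ℝ) (hR : IsAlgCurvTensor R)
    (l m : ℝ) (v₁ v₂ v₃ v₄ : V)
    (hv : Orthonormal ℝ ![v₁, v₂, v₃, v₄])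
    (h1 : R v₁ v₃ v₁ v₃ + l ^ 2 * R v₁ v₄ v₁ v₄ + m ^ 2 * R v₂ v₃ v₂ v₃
        + l ^ 2 * m ^ 2 * R v₂ v₄ v₂ v₄ - 2 * l * m * R v₁ v₂ v₃ v₄ = 0)
    (h2 : R v₁ v₂ v₁ v₂ + l ^ 2 * R v₂ v₄ v₂ v₄ + m ^ 2 * R v₁ v₃ v₁ v₃
        + l ^ 2 * m ^ 2 * R v₃ v₄ v₃ v₄ - 2 * l * m * R v₂ v₃ v₁ v₄ = 0)
    (h3 : R v₂ v₃ v₂ v₃ + l ^ 2 * R v₃ v₄ v₃ v₄ + m ^ 2 * R v₁ v₂ v₁ v₂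
        + l ^ 2 * m ^ 2 * R v₁ v₄ v₁ v₄ - 2 * l * m * R v₃ v₁ v₂ v₄ = 0) :
    (R v₁ v₂ v₁ v₂ + R v₁ v₃ v₁ v₃ + R v₂ v₃ v₂ v₃)
      + l ^ 2 * (R v₁ v₄ v₁ v₄ + R v₂ v₄ v₂ v₄ + R v₃ v₄ v₃ v₄) = 0 :=
  sum_of_three_isotropic_identities_general R hR l m v₁ v₂ v₃ v₄ h1 h2 h3
end

section
/- Let V be a real inner product space and let R : V × V × V × V → ℝ be an algebraic curvature tensor with nonnegative sectional curvatures, i.e., R(x,y,x,y) ≥ 0 for all x, y ∈ V. Let λ, μ ∈ ℝ and let v₁, v₂, v₃, v₄ ∈ V be orthonormal vectors. Suppose that the following three equations hold: (1) R(v₁,v₃,v₁,v₃) + λ²·R(v₁,v₄,v₁,v₄) + μ²·R(v₂,v₃,v₂,v₃) + λ²μ²·R(v₂,v₄,v₂,v₄) − 2λμ·R(v₁,v₂,v₃,v₄) = 0; (2) R(v₁,v₂,v₁,v₂) + λ²·R(v₂,v₄,v₂,v₄) + μ²·R(v₁,v₃,v₁,v₃) + λ²μ²·R(v₃,v₄,v₃,v₄)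 − 2λμ·R(v₂,v₃,v₁,v₄) = 0; (3) R(v₂,v₃,v₂,v₃) + λ²·R(v₃,v₄,v₃,v₄) + μ²·R(v₁,v₂,v₁,v₂) + λ²μ²·R(v₁,v₄,v₁,v₄) − 2λμ·R(v₃,v₁,v₂,v₄) = 0. Then R(v₁,v₂,v₁,v₂) = 0. -/
/-!
Adding the three identities, the mixed terms add up to `2lm` times a cyclic sum that vanishes by the
first Bianchi identity. What is left is `1 + m²` times a sum of nonnegative sectional curvatures,
so each of them, `R(v₁,v₂,v₁,v₂)` in particular, is zero.
-/

open scoped RealInnerProductSpace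

theorem sectional_curvature_vanishes_general
    {V : Type*} [NormedAddCommGroup V] [InnerProductSpace ℝ V]
    (R : V → V → V → V → ℝ) (hR : IsAlgCurvTensor R)
    (hnonneg : ∀ x y : V, 0 ≤ R x y x y)
    (l m : ℝ) (v₁ v₂ v₃ v₄ : V)
    (h1 : R v₁ v₃ v₁ v₃ + l ^ 2 * R v₁ v₄ v₁ v₄ + m ^ 2 * R v₂ v₃ v₂ v₃
        + l ^ 2 * m ^ 2 * R v₂ v₄ v₂ v₄ - 2 * l * m * R v₁ v₂ v₃ v₄ = 0)
    (h2 : R v₁ v₂ v₁ v₂ + l ^ 2 * R v₂ v₄ v₂ v₄ + m ^ 2 * R v₁ v₃ v₁ v₃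
        + l ^ 2 * m ^ 2 * R v₃ v₄ v₃ v₄ - 2 * l * m * R v₂ v₃ v₁ v₄ = 0)
    (h3 : R v₂ v₃ v₂ v₃ + l ^ 2 * R v₃ v₄ v₃ v₄ + m ^ 2 * R v₁ v₂ v₁ v₂
        + l ^ 2 * m ^ 2 * R v₁ v₄ v₁ v₄ - 2 * l * m * R v₃ v₁ v₂ v₄ = 0) :
    R v₁ v₂ v₁ v₂ = 0 := by
  have hsum : (1 + m ^ 2) * (R v₁ v₂ v₁ v₂ + R v₁ v₃ v₁ v₃ + R v₂ v₃ v₂ v₃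
      + l ^ 2 * (R v₁ v₄ v₁ v₄ + R v₂ v₄ v₂ v₄ + R v₃ v₄ v₃ v₄)) = 0 := by
    linear_combination h1 + h2 + h3 + 2 * l * m * hR.bianchi v₁ v₂ v₃ v₄
  have hcurv := (mul_eq_zero.1 hsum).resolve_left (by positivity)
  have hl : 0 ≤ l ^ 2 * (R v₁ v₄ v₁ v₄ + R v₂ v₄ v₂ v₄ + R v₃ v₄ v₃ v₄) :=
    mul_nonneg (sq_nonneg l) (by linarith [hnonneg v₁ v₄, hnonneg v₂ v₄, hnonneg v₃ v₄])
  linarith [hnonneg v₁ v₂, hnonneg v₁ v₃, hnonneg v₂ v₃]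

/-- If an algebraic curvature tensor has nonnegative sectional curvatures and the three
vanishing modified isotropic curvature identities hold for an orthonormal four-frame
`v₁, v₂, v₃, v₄`, then the sectional curvature `R(v₁,v₂,v₁,v₂)` vanishes. -/
theorem sectional_curvature_vanishes
    {V : Type*} [NormedAddCommGroup V] [InnerProductSpace ℝ V]
    (R : V → V → V → V → ℝ) (hR : IsAlgCurvTensor R)
    (hnonneg : ∀ x y : V, 0 ≤ R x y x y)
    (l m : ℝ) (v₁ v₂ v₃ v₄ : V)
    (hv : Orthonormal ℝ ![v₁, v₂, v₃, v₄])
    (h1 : R v₁ v₃ v₁ v₃ + l ^ 2 * R v₁ v₄ v₁ v₄ + m ^ 2 * R v₂ v₃ v₂ v₃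
        + l ^ 2 * m ^ 2 * R v₂ v₄ v₂ v₄ - 2 * l * m * R v₁ v₂ v₃ v₄ = 0)
    (h2 : R v₁ v₂ v₁ v₂ + l ^ 2 * R v₂ v₄ v₂ v₄ + m ^ 2 * R v₁ v₃ v₁ v₃
        + l ^ 2 * m ^ 2 * R v₃ v₄ v₃ v₄ - 2 * l * m * R v₂ v₃ v₁ v₄ = 0)
    (h3 : R v₂ v₃ v₂ v₃ + l ^ 2 * R v₃ v₄ v₃ v₄ + m ^ 2 * R v₁ v₂ v₁ v₂
        + l ^ 2 * m ^ 2 * R v₁ v₄ v₁ v₄ - 2 * l * m * R v₃ v₁ v₂ v₄ = 0) :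
    R v₁ v₂ v₁ v₂ = 0 :=
  sectional_curvature_vanishes_general R hR hnonneg l m v₁ v₂ v₃ v₄ h1 h2 h3
end
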